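/- arXiv:1402.2118 — 7 statements merged into one kernel-verified Lean document; each statement's English description precedes it below -/
import Mathlib

section
/- Let n be a natural number and let f:(0,∞)→ℝ be a strictly increasing continuously differentiable function. Suppose that for every n×n complex matrix h, the map x ↦ Tr(h* D_f(x)⁻¹ h) is concave on the set of Hermitian positive definite n×n matrices. Then the map (x,h) ↦ Tr(h* D_f(x) h) is jointly convex in pairs (x,h) where x ranges over Hermitian positive definite n×n matrices and h over all n×n complex matrices. -/
open Matrix
open scoped ComplexOrder

/-- The divided difference `[t,s]_f` of a differentiable function `f`. -/
noncomputable def dd (f : ℝ → ℝ) (t s : ℝ) : ℝ :=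
  if t = s then deriv f t else (f t - f s) / (t - s)

/-- The Fréchet differential superoperator `D_f(x)`: Hadamard multiplication with the
Löwner matrix `([λ_i,λ_j]_f)` in an orthonormal eigenbasis of `x`
(junk value `0` if `x` is not Hermitian). -/
noncomputable def Dmap (f : ℝ → ℝ) {m : Type*} [Fintype m] [DecidableEq m]
    (x h : Matrix m m ℂ) : Matrix m m ℂ :=
  if hx : x.IsHermitian then
    (hx.eigenvectorUnitary : Matrix m m ℂ) *
      ((Matrix.of fun i j => ((dd f (hx.eigenvalues i) (hx.eigenvalues j) : ℝ) : ℂ)).hadamard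
        ((hx.eigenvectorUnitary : Matrix m m ℂ)ᴴ * h * (hx.eigenvectorUnitary : Matrix m m ℂ))) *
      (hx.eigenvectorUnitary : Matrix m m ℂ)ᴴ
  else 0

/-- The inverse superoperator `D_f(x)⁻¹`: Hadamard multiplication with the entrywise
reciprocal `([λ_i,λ_j]_f⁻¹)` of the Löwner matrix in an orthonormal eigenbasis of `x`. -/
noncomputable def DmapInv (f : ℝ → ℝ) {m : Type*} [Fintype m] [DecidableEq m]
    (x h : Matrix m m ℂ) : Matrix m m ℂ :=
  if hx : x.IsHermitian then
    (hx.eigenvectorUnitary : Matrix m m ℂ) *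
      ((Matrix.of fun i j => (((dd f (hx.eigenvalues i) (hx.eigenvalues j))⁻¹ : ℝ) : ℂ)).hadamard
        ((hx.eigenvectorUnitary : Matrix m m ℂ)ᴴ * h * (hx.eigenvectorUnitary : Matrix m m ℂ))) *
      (hx.eigenvectorUnitary : Matrix m m ℂ)ᴴ
  else 0

/-- Functional calculus `f(x)` for Hermitian matrices (junk value `0` otherwise). -/
noncomputable def mfun (f : ℝ → ℝ) {m : Type*} [Fintype m] [DecidableEq m]
    (x : Matrix m m ℂ) : Matrix m m ℂ :=
  if hx : x.IsHermitian then
    (hx.eigenvectorUnitary : Matrix m m ℂ) *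
      Matrix.diagonal (fun i => ((f (hx.eigenvalues i) : ℝ) : ℂ)) *
      (hx.eigenvectorUnitary : Matrix m m ℂ)ᴴ
  else 0

/-- The bivariate function `g(t,s) = (s-t)/(f(s)-f(t))`, with `g(t,t) = 1/f'(t)`. -/
noncomputable def gfun (f : ℝ → ℝ) (t s : ℝ) : ℝ :=
  if t = s then (deriv f t)⁻¹ else (s - t) / (f s - f t)

/-- `Σ_{i,j} |⟨h e_i, d_j⟩|² g(λ_i, μ_j)`, where `(e_i, λ_i)` and `(d_j, μ_j)` are
orthonormal eigenbases and eigenvalues of `x` and `y`; this equals `Tr h* g(L_x, R_y) h`. -/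
noncomputable def Qg (f : ℝ → ℝ) {m : Type*} [Fintype m] [DecidableEq m]
    (h x y : Matrix m m ℂ) : ℝ :=
  if hx : x.IsHermitian then
    if hy : y.IsHermitian then
      ∑ i, ∑ j,
        ‖((hy.eigenvectorUnitary : Matrix m m ℂ)ᴴ * h *
            (hx.eigenvectorUnitary : Matrix m m ℂ)) j i‖ ^ 2 *
          gfun f (hx.eigenvalues i) (hy.eigenvalues j)
    else 0
  else 0

/-- A function `g : (0,∞) → ℝ` is operator convex if for all positive definite complex
matrices `A`, `B` of any size and `c ∈ [0,1]` one has
`g(cA + (1-c)B) ≼ c g(A) + (1-c) g(B)` in the Loewner order. -/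
def IsOperatorConvex (g : ℝ → ℝ) : Prop :=
  ∀ (m : ℕ) (A B : Matrix (Fin m) (Fin m) ℂ), A.PosDef → B.PosDef →
    ∀ c : ℝ, c ∈ Set.Icc (0 : ℝ) 1 →
      (c • mfun g A + (1 - c) • mfun g B - mfun g (c • A + (1 - c) • B)).PosSemidef


section StmtAux

open scoped ComplexOrder
open Matrix Finset

variable {m : Type*} [Fintype m] [DecidableEq m]

lemma aux_smul_posDef {c : ℝ} (hc : 0 < c) {M : Matrix m m ℂ} (hM : M.PosDef) :
    (c • M).PosDef := by
  refine ⟨?_, fun x hx => ?_⟩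
  · show (c • M)ᴴ = c • M
    rw [Matrix.conjTranspose_smul, star_trivial, hM.1.eq]
  · exact (hM.smul hc).2 hx

lemma aux_convex_posDef : Convex ℝ {x : Matrix m m ℂ | x.PosDef} := by
  intro x hx y hy a b ha hb hab
  rcases eq_or_lt_of_le ha with ha0 | ha0
  · have hb1 : b = 1 := by linarith
    simpa [← ha0, hb1] using hy
  rcases eq_or_lt_of_le hb with hb0 | hb0
  · have ha1 : a = 1 := by linarith
    simpa [← hb0, ha1] using hx
  exact (aux_smul_posDef ha0 hx).add (aux_smul_posDef hb0 hy)

lemma aux_re_term (c : ℝ) (a : ℂ) :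
    ((starRingEnd ℂ) a * ((c : ℂ) * a)).re = c * ‖a‖ ^ 2 := by
  have h1 : (starRingEnd ℂ) a * ((c : ℂ) * a) = (c : ℂ) * ((starRingEnd ℂ) a * a) := by ring
  rw [h1, mul_comm ((starRingEnd ℂ) a) a, Complex.mul_conj, ← Complex.ofReal_mul,
    Complex.ofReal_re, Complex.normSq_eq_norm_sq]

lemma aux_unitary1 {x : Matrix m m ℂ} (hx : x.IsHermitian) :
    (hx.eigenvectorUnitary : Matrix m m ℂ)ᴴ * (hx.eigenvectorUnitary : Matrix m m ℂ) = 1 := by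
  simpa [star_eq_conjTranspose] using Matrix.mem_unitaryGroup_iff'.mp hx.eigenvectorUnitary.2

lemma aux_unitary2 {x : Matrix m m ℂ} (hx : x.IsHermitian) :
    (hx.eigenvectorUnitary : Matrix m m ℂ) * (hx.eigenvectorUnitary : Matrix m m ℂ)ᴴ = 1 := by
  simpa [star_eq_conjTranspose] using Matrix.mem_unitaryGroup_iff.mp hx.eigenvectorUnitary.2

lemma aux_trace_conj (U h M : Matrix m m ℂ) :
    Matrix.trace (hᴴ * (U * M * Uᴴ)) = Matrix.trace ((Uᴴ * h * U)ᴴ * M) := by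
  have e1 : hᴴ * (U * M * Uᴴ) = (hᴴ * U * M) * Uᴴ := by
    simp only [mul_assoc]
  have e2 : (Uᴴ * h * U)ᴴ = Uᴴ * hᴴ * U := by
    simp [Matrix.conjTranspose_mul, mul_assoc]
  rw [e1, Matrix.trace_mul_comm, e2]
  simp only [mul_assoc]

lemma aux_trace_hadamard_re (U h : Matrix m m ℂ) (c : m → m → ℝ) :
    (Matrix.trace (hᴴ * (U *
        ((Matrix.of fun i j => ((c i j : ℝ) : ℂ)).hadamard (Uᴴ * h * U)) * Uᴴ))).re
      = ∑ i, ∑ j, c i j * ‖(Uᴴ * h * U) i j‖ ^ 2 := by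
  rw [aux_trace_conj]
  set hh := Uᴴ * h * U with hdef
  have e1 : Matrix.trace (hhᴴ * ((Matrix.of fun i j => ((c i j : ℝ) : ℂ)).hadamard hh))
      = ∑ i, ∑ j, (starRingEnd ℂ) (hh j i) * ((c j i : ℂ) * hh j i) := by
    simp [Matrix.trace, Matrix.diag, Matrix.mul_apply, Matrix.hadamard,
      Matrix.conjTranspose_apply, Matrix.of_apply]
  rw [e1]
  conv_lhs => rw [Finset.sum_comm]
  rw [Complex.re_sum]
  refine Finset.sum_congr rfl fun i _ => ?_
  rw [Complex.re_sum]
  exact Finset.sum_congr rfl fun j _ => aux_re_term (c i j) (hh i j)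

lemma aux_trace_inner (U h k : Matrix m m ℂ) (hU2 : U * Uᴴ = 1) :
    Matrix.trace (kᴴ * h) = Matrix.trace ((Uᴴ * k * U)ᴴ * (Uᴴ * h * U)) := by
  have e2 : (Uᴴ * k * U)ᴴ = Uᴴ * kᴴ * U := by
    simp [Matrix.conjTranspose_mul, mul_assoc]
  rw [e2]
  have e3 : Uᴴ * kᴴ * U * (Uᴴ * h * U) = Uᴴ * (kᴴ * h) * U := by
    calc Uᴴ * kᴴ * U * (Uᴴ * h * U) = Uᴴ * kᴴ * (U * Uᴴ) * h * U := by
          simp only [mul_assoc]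
      _ = Uᴴ * (kᴴ * h) * U := by rw [hU2]; simp only [mul_one, mul_assoc]
  rw [e3, Matrix.trace_mul_cycle, ← mul_assoc, hU2, one_mul]

lemma aux_trace_inner_re (U h k : Matrix m m ℂ) (hU2 : U * Uᴴ = 1) :
    (Matrix.trace (kᴴ * h)).re
      = ∑ i, ∑ j, ((starRingEnd ℂ) ((Uᴴ * k * U) i j) * (Uᴴ * h * U) i j).re := by
  rw [aux_trace_inner U h k hU2]
  set kk := Uᴴ * k * U with hkk
  set hh := Uᴴ * h * U with hhh
  have e1 : Matrix.trace (kkᴴ * hh)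
      = ∑ i, ∑ j, (starRingEnd ℂ) (kk j i) * (hh j i) := by
    simp [Matrix.trace, Matrix.diag, Matrix.mul_apply, Matrix.conjTranspose_apply]
  rw [e1]
  conv_lhs => rw [Finset.sum_comm]
  rw [Complex.re_sum]
  exact Finset.sum_congr rfl fun i _ => Complex.re_sum _ _

lemma aux_key_ineq {d : ℝ} (hd : 0 < d) (a b : ℂ) :
    2 * ((starRingEnd ℂ) b * a).re - d⁻¹ * ‖b‖ ^ 2 ≤ d * ‖a‖ ^ 2 := by
  have h1 : ((starRingEnd ℂ) b * a).re ≤ ‖b‖ * ‖a‖ := by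
    calc ((starRingEnd ℂ) b * a).re ≤ ‖(starRingEnd ℂ) b * a‖ := by
          exact Complex.re_le_norm _
      _ = ‖b‖ * ‖a‖ := by rw [norm_mul, RCLike.norm_conj]
  have h2 : 0 < d⁻¹ := inv_pos.mpr hd
  have h3 : d * d⁻¹ = 1 := mul_inv_cancel₀ hd.ne'
  nlinarith [sq_nonneg (d * ‖a‖ - ‖b‖), sq_nonneg (‖a‖ - ‖b‖), norm_nonneg a, norm_nonneg b]

lemma aux_dd_pos (f : ℝ → ℝ) (hmono : StrictMonoOn f (Set.Ioi (0 : ℝ)))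
    (hd : ∀ t ∈ Set.Ioi (0:ℝ), 0 < deriv f t) {t s : ℝ}
    (ht : t ∈ Set.Ioi (0:ℝ)) (hs : s ∈ Set.Ioi (0:ℝ)) : 0 < dd f t s := by
  unfold dd
  split_ifs with h
  · subst h; exact hd t ht
  · rcases (Ne.lt_or_gt h) with hlt | hlt
    · have e : (f t - f s) / (t - s) = (f s - f t) / (s - t) := by
        rw [← neg_div_neg_eq]; ring_nf
      rw [e]
      exact div_pos (sub_pos.2 (hmono ht hs hlt)) (sub_pos.2 hlt)
    · exact div_pos (sub_pos.2 (hmono hs ht hlt)) (sub_pos.2 hlt)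

/-- Lower bound: `2 Re Tr(k* h) - Re Tr(k* D⁻¹ k) ≤ Re Tr(h* D h)`. -/
lemma aux_lemA (f : ℝ → ℝ) (hmono : StrictMonoOn f (Set.Ioi (0 : ℝ)))
    (hd : ∀ t ∈ Set.Ioi (0:ℝ), 0 < deriv f t)
    (x h k : Matrix m m ℂ) (hx : x.PosDef) :
    2 * (Matrix.trace (kᴴ * h)).re - (Matrix.trace (kᴴ * DmapInv f x k)).re
      ≤ (Matrix.trace (hᴴ * Dmap f x h)).re := by
  have hH := hx.isHermitian
  have hdd : ∀ i j, 0 < dd f (hH.eigenvalues i) (hH.eigenvalues j) := fun i j =>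
    aux_dd_pos f hmono hd (hx.eigenvalues_pos i) (hx.eigenvalues_pos j)
  rw [Dmap, DmapInv, dif_pos hH, dif_pos hH]
  set U := (hH.eigenvectorUnitary : Matrix m m ℂ) with hU
  rw [aux_trace_hadamard_re U h (fun i j => dd f (hH.eigenvalues i) (hH.eigenvalues j)),
    aux_trace_hadamard_re U k (fun i j => (dd f (hH.eigenvalues i) (hH.eigenvalues j))⁻¹),
    aux_trace_inner_re U h k (aux_unitary2 hH)]
  rw [Finset.mul_sum, ← Finset.sum_sub_distrib]
  refine Finset.sum_le_sum fun i _ => ?_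
  rw [Finset.mul_sum, ← Finset.sum_sub_distrib]
  exact Finset.sum_le_sum fun j _ => aux_key_ineq (hdd i j) _ _

/-- Equality at the optimum `k = D_f(x) h`. -/
lemma aux_lemB (f : ℝ → ℝ) (hmono : StrictMonoOn f (Set.Ioi (0 : ℝ)))
    (hd : ∀ t ∈ Set.Ioi (0:ℝ), 0 < deriv f t)
    (x h : Matrix m m ℂ) (hx : x.PosDef) :
    2 * (Matrix.trace ((Dmap f x h)ᴴ * h)).re
        - (Matrix.trace ((Dmap f x h)ᴴ * DmapInv f x (Dmap f x h))).re
      = (Matrix.trace (hᴴ * Dmap f x h)).re := by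
  have hH := hx.isHermitian
  have hdd : ∀ i j, 0 < dd f (hH.eigenvalues i) (hH.eigenvalues j) := fun i j =>
    aux_dd_pos f hmono hd (hx.eigenvalues_pos i) (hx.eigenvalues_pos j)
  set U := (hH.eigenvectorUnitary : Matrix m m ℂ) with hU
  have hU1 : Uᴴ * U = 1 := aux_unitary1 hH
  have hU2 : U * Uᴴ = 1 := aux_unitary2 hH
  set C : Matrix m m ℂ :=
    Matrix.of fun i j => ((dd f (hH.eigenvalues i) (hH.eigenvalues j) : ℝ) : ℂ) with hC
  set hh := Uᴴ * h * U with hhh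
  have hDm : Dmap f x h = U * (C.hadamard hh) * Uᴴ := by
    rw [Dmap, dif_pos hH]
  have hk : Uᴴ * (Dmap f x h) * U = C.hadamard hh := by
    rw [hDm]
    calc Uᴴ * (U * C.hadamard hh * Uᴴ) * U
        = (Uᴴ * U) * C.hadamard hh * (Uᴴ * U) := by simp only [mul_assoc]
      _ = C.hadamard hh := by rw [hU1]; simp
  have term : ∀ (d : ℝ) (a : ℂ), ((starRingEnd ℂ) ((d : ℂ) * a) * a).re = d * ‖a‖ ^ 2 := by
    intro d a
    have e : (starRingEnd ℂ) ((d : ℂ) * a) * a = (starRingEnd ℂ) a * ((d : ℂ) * a) := by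
      rw [_root_.map_mul, Complex.conj_ofReal]; ring
    rw [e, aux_re_term]
  have hterm1 : (Matrix.trace ((Dmap f x h)ᴴ * h)).re
      = ∑ i, ∑ j, dd f (hH.eigenvalues i) (hH.eigenvalues j) * ‖hh i j‖ ^ 2 := by
    rw [aux_trace_inner_re U h (Dmap f x h) hU2, hk]
    refine Finset.sum_congr rfl fun i _ => Finset.sum_congr rfl fun j _ => ?_
    rw [← hhh]
    have hCh : (C.hadamard hh) i j
        = ((dd f (hH.eigenvalues i) (hH.eigenvalues j) : ℝ) : ℂ) * hh i j := rfl
    rw [hCh, term]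
  have hterm3 : (Matrix.trace (hᴴ * Dmap f x h)).re
      = ∑ i, ∑ j, dd f (hH.eigenvalues i) (hH.eigenvalues j) * ‖hh i j‖ ^ 2 := by
    rw [hDm]
    exact aux_trace_hadamard_re U h _
  have hterm2 : (Matrix.trace ((Dmap f x h)ᴴ * DmapInv f x (Dmap f x h))).re
      = ∑ i, ∑ j, dd f (hH.eigenvalues i) (hH.eigenvalues j) * ‖hh i j‖ ^ 2 := by
    rw [DmapInv, dif_pos hH]
    rw [aux_trace_hadamard_re U (Dmap f x h)
      (fun i j => (dd f (hH.eigenvalues i) (hH.eigenvalues j))⁻¹)]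
    refine Finset.sum_congr rfl fun i _ => Finset.sum_congr rfl fun j _ => ?_
    rw [hk]
    have : (C.hadamard hh) i j
        = ((dd f (hH.eigenvalues i) (hH.eigenvalues j) : ℝ) : ℂ) * hh i j := rfl
    rw [this, norm_mul, Complex.norm_real, Real.norm_eq_abs,
      abs_of_pos (hdd i j), mul_pow]
    set d := dd f (hH.eigenvalues i) (hH.eigenvalues j)
    have hdne : d ≠ 0 := (hdd i j).ne'
    field_simp
  rw [hterm1, hterm2, hterm3]
  ring

open Topology Filter in
lemma aux_deriv_nonneg (f : ℝ → ℝ) (hmono : StrictMonoOn f (Set.Ioi (0 : ℝ))) {t : ℝ}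
    (ht : t ∈ Set.Ioi (0:ℝ)) (hdiff : DifferentiableAt ℝ f t) : 0 ≤ deriv f t := by
  have h := hdiff.hasDerivAt
  rw [hasDerivAt_iff_tendsto_slope] at h
  have h2 : Filter.Tendsto (slope f t) (𝓝[>] t) (𝓝 (deriv f t)) :=
    h.mono_left (nhdsWithin_mono t (fun s hs => Set.mem_compl_singleton_iff.mpr
      (LT.lt.ne' hs)))
  refine ge_of_tendsto h2 ?_
  filter_upwards [self_mem_nhdsWithin] with s hs
  rw [slope_def_field]
  have hs' : s ∈ Set.Ioi (0:ℝ) := Set.mem_Ioi.mpr (lt_trans ht hs)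
  exact div_nonneg (sub_nonneg.2 (hmono ht hs' hs).le) (sub_nonneg.2 (le_of_lt hs))

lemma aux_scalar_eigen (t : ℝ) (ht : ((t • (1 : Matrix m m ℂ))).IsHermitian) (i : m) :
    ht.eigenvalues i = t := by
  have spec := ht.spectral_theorem
  set U := (ht.eigenvectorUnitary : Matrix m m ℂ) with hU
  have hU1 : Uᴴ * U = 1 := aux_unitary1 ht
  have hD : Uᴴ * (t • (1 : Matrix m m ℂ)) * U
      = Matrix.diagonal (RCLike.ofReal ∘ ht.eigenvalues) := by
    conv_lhs => rw [spec]
    rw [← Matrix.star_eq_conjTranspose U]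
    calc star U * (U * Matrix.diagonal (RCLike.ofReal ∘ ht.eigenvalues) * star U) * U
        = (star U * U) * Matrix.diagonal (RCLike.ofReal ∘ ht.eigenvalues) * (star U * U) := by
          simp only [mul_assoc]
      _ = Matrix.diagonal (RCLike.ofReal ∘ ht.eigenvalues) := by
          rw [Matrix.star_eq_conjTranspose U, hU1]; simp
  have hD2 : Uᴴ * (t • (1 : Matrix m m ℂ)) * U = t • (1 : Matrix m m ℂ) := by
    rw [Matrix.mul_smul, mul_one, Matrix.smul_mul, hU1]
  have hDD : Matrix.diagonal (RCLike.ofReal ∘ ht.eigenvalues)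
      = t • (1 : Matrix m m ℂ) := hD.symm.trans hD2
  have := congrArg (fun M : Matrix m m ℂ => M i i) hDD
  simp only [Matrix.diagonal_apply_eq, Function.comp_apply, Matrix.smul_apply,
    Matrix.one_apply_eq, Complex.real_smul, mul_one] at this
  exact RCLike.ofReal_inj.mp this

lemma aux_trace_scalar (f : ℝ → ℝ) (t : ℝ)
    (ht : (t • (1 : Matrix m m ℂ)).IsHermitian) :
    (Matrix.trace ((1:Matrix m m ℂ)ᴴ * DmapInv f (t • (1 : Matrix m m ℂ)) 1)).re
      = (Fintype.card m : ℝ) * (deriv f t)⁻¹ := by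
  rw [DmapInv, dif_pos ht]
  set U := (ht.eigenvectorUnitary : Matrix m m ℂ) with hU
  rw [aux_trace_hadamard_re U 1 (fun i j => (dd f (ht.eigenvalues i) (ht.eigenvalues j))⁻¹)]
  have hUid : Uᴴ * (1:Matrix m m ℂ) * U = 1 := by rw [mul_one]; exact aux_unitary1 ht
  have hev : ∀ i, ht.eigenvalues i = t := aux_scalar_eigen t ht
  have hddt : dd f t t = deriv f t := by rw [dd, if_pos rfl]
  simp only [hUid, hev, hddt]
  have : ∀ i : m, ∑ j : m, (deriv f t)⁻¹ * ‖(1 : Matrix m m ℂ) i j‖ ^ 2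
      = (deriv f t)⁻¹ := by
    intro i
    rw [Finset.sum_eq_single i]
    · simp [Matrix.one_apply_eq]
    · intro j _ hji
      simp [Matrix.one_apply_ne (Ne.symm hji)]
    · intro hi; exact absurd (Finset.mem_univ i) hi
  simp only [this, Finset.sum_const, Finset.card_univ, nsmul_eq_mul]

lemma aux_deriv_pos (n : ℕ) (hn : n ≠ 0) (f : ℝ → ℝ)
    (hmono : StrictMonoOn f (Set.Ioi (0 : ℝ)))
    (hsmooth : ContDiffOn ℝ 1 f (Set.Ioi (0 : ℝ)))
    (hconc : ConcaveOn ℝ {x : Matrix (Fin n) (Fin n) ℂ | x.PosDef}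
        (fun x => (Matrix.trace ((1 : Matrix (Fin n) (Fin n) ℂ)ᴴ * DmapInv f x 1)).re)) :
    ∀ t ∈ Set.Ioi (0:ℝ), 0 < deriv f t := by
  have hdiff : ∀ t ∈ Set.Ioi (0:ℝ), DifferentiableAt ℝ f t := fun t ht =>
    (hsmooth.differentiableOn one_ne_zero).differentiableAt (Ioi_mem_nhds ht)
  have hnn : ∀ t ∈ Set.Ioi (0:ℝ), 0 ≤ deriv f t := fun t ht =>
    aux_deriv_nonneg f hmono ht (hdiff t ht)
  have hzero : ∀ t ∈ Set.Ioi (0:ℝ), deriv f t ≠ 0 := by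
    intro t0 ht0 h0
    have ht0' : (0:ℝ) < t0 := ht0
    have hn' : (0:ℝ) < n := by exact_mod_cast Nat.pos_of_ne_zero hn
    have hb0 : ∀ b, t0 < b → deriv f b = 0 := by
      intro b hbb
      set a := t0 / 2 with ha_def
      have ha : (0:ℝ) < a := by positivity
      have hab : a < t0 := by rw [ha_def]; linarith
      have hba : a < b := lt_trans hab hbb
      set θ := (b - t0) / (b - a) with hθ_def
      have hne : b - a ≠ 0 := ne_of_gt (by linarith)
      have hθ0 : 0 < θ := div_pos (by linarith) (by linarith)
      have hθ1 : θ < 1 := (div_lt_one (by linarith)).2 (by linarith)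
      have hθm : θ * (b - a) = b - t0 := by rw [hθ_def, div_mul_cancel₀ _ hne]
      have hcomb : θ * a + (1 - θ) * b = t0 := by
        have h1 : θ * a + (1 - θ) * b = b - θ * (b - a) := by ring
        rw [h1, hθm]; ring
      have hxa : (a • (1 : Matrix (Fin n) (Fin n) ℂ)).PosDef :=
        aux_smul_posDef ha Matrix.PosDef.one
      have hxb : (b • (1 : Matrix (Fin n) (Fin n) ℂ)).PosDef :=
        aux_smul_posDef (lt_trans ha hba) Matrix.PosDef.one
      have hxt : (t0 • (1 : Matrix (Fin n) (Fin n) ℂ)).PosDef :=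
        aux_smul_posDef ht0' Matrix.PosDef.one
      have key := hconc.2 hxa hxb (show (0:ℝ) ≤ θ by linarith)
        (show (0:ℝ) ≤ 1 - θ by linarith) (by ring)
      have hcombm : θ • (a • (1 : Matrix (Fin n) (Fin n) ℂ))
          + (1-θ) • (b • (1 : Matrix (Fin n) (Fin n) ℂ))
          = t0 • (1 : Matrix (Fin n) (Fin n) ℂ) := by
        rw [smul_smul, smul_smul, ← add_smul, hcomb]
      rw [hcombm] at key
      simp only [aux_trace_scalar f a hxa.isHermitian, aux_trace_scalar f b hxb.isHermitian,
        aux_trace_scalar f t0 hxt.isHermitian, smul_eq_mul, Fintype.card_fin] at key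
      rw [h0, _root_.inv_zero, mul_zero] at key
      have hga : 0 ≤ (deriv f a)⁻¹ := inv_nonneg.2 (hnn a ha)
      have hgb : 0 ≤ (deriv f b)⁻¹ := inv_nonneg.2 (hnn b (lt_trans ht0' hbb))
      have hle : (deriv f b)⁻¹ ≤ 0 := by
        nlinarith [key, mul_nonneg hθ0.le (mul_nonneg hn'.le hga),
          mul_pos (show (0:ℝ) < 1 - θ by linarith) hn']
      exact inv_eq_zero.mp (le_antisymm hle hgb)
    have hcont : ContinuousOn f (Set.Icc (t0+1) (t0+2)) := by
      intro y hy
      rw [Set.mem_Icc] at hy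
      have hy0 : y ∈ Set.Ioi (0:ℝ) := Set.mem_Ioi.mpr (by linarith [hy.1])
      exact ((hdiff y hy0).continuousAt).continuousWithinAt
    have hder : ∀ y ∈ Set.Ioo (t0+1) (t0+2), HasDerivAt f (deriv f y) y := by
      intro y hy
      rw [Set.mem_Ioo] at hy
      exact (hdiff y (Set.mem_Ioi.mpr (by linarith [hy.1]))).hasDerivAt
    obtain ⟨c, hc, hceq⟩ := exists_hasDerivAt_eq_slope f (deriv f)
      (show t0 + 1 < t0 + 2 by linarith) hcont hder
    rw [Set.mem_Ioo] at hc
    have hpos : 0 < deriv f c := by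
      rw [hceq]
      refine div_pos (sub_pos.2 (hmono ?_ ?_ (by linarith))) (by linarith)
      · exact Set.mem_Ioi.mpr (by linarith)
      · exact Set.mem_Ioi.mpr (by linarith)
    have hzeroc : deriv f c = 0 := hb0 c (by linarith [hc.1])
    linarith
  intro t ht
  exact lt_of_le_of_ne (hnn t ht) (Ne.symm (hzero t ht))

end StmtAux

/-- If `x ↦ Tr h* D_f(x)⁻¹ h` is concave on positive definite matrices for every `h`,
then `(x,h) ↦ Tr h* D_f(x) h` is jointly convex. -/
theorem stmt_0 (n : ℕ) (f : ℝ → ℝ)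
    (hmono : StrictMonoOn f (Set.Ioi (0 : ℝ)))
    (hsmooth : ContDiffOn ℝ 1 f (Set.Ioi (0 : ℝ)))
    (hconc : ∀ h : Matrix (Fin n) (Fin n) ℂ,
      ConcaveOn ℝ {x : Matrix (Fin n) (Fin n) ℂ | x.PosDef}
        (fun x => (Matrix.trace (hᴴ * DmapInv f x h)).re)) :
    ConvexOn ℝ {p : Matrix (Fin n) (Fin n) ℂ × Matrix (Fin n) (Fin n) ℂ | p.1.PosDef}
      (fun p => (Matrix.trace (p.2ᴴ * Dmap f p.1 p.2)).re) := by
  have hset : Convex ℝ {p : Matrix (Fin n) (Fin n) ℂ × Matrix (Fin n) (Fin n) ℂ | p.1.PosDef} := by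
    intro p hp q hq a b ha hb hab
    simp only [Set.mem_setOf_eq, Prod.fst_add, Prod.smul_fst]
    exact aux_convex_posDef hp hq ha hb hab
  rcases Nat.eq_zero_or_pos n with hn0 | hnpos
  · subst hn0
    have hfun : (fun p : Matrix (Fin 0) (Fin 0) ℂ × Matrix (Fin 0) (Fin 0) ℂ =>
        (Matrix.trace (p.2ᴴ * Dmap f p.1 p.2)).re) = fun _ => (0:ℝ) := by
      funext p
      have : Matrix.trace (p.2ᴴ * Dmap f p.1 p.2) = 0 := by
        simp [Matrix.trace]
      rw [this]; simp
    rw [hfun]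
    exact convexOn_const 0 hset
  have hd : ∀ t ∈ Set.Ioi (0:ℝ), 0 < deriv f t :=
    aux_deriv_pos n (Nat.pos_iff_ne_zero.mp hnpos) f hmono hsmooth (hconc 1)
  refine ⟨hset, ?_⟩
  rintro p hp q hq a b ha hb hab
  simp only [Set.mem_setOf_eq] at hp hq
  simp only [Prod.fst_add, Prod.snd_add, Prod.smul_fst, Prod.smul_snd, smul_eq_mul]
  set X := a • p.1 + b • q.1 with hX
  set H := a • p.2 + b • q.2 with hH
  have hXpos : X.PosDef := aux_convex_posDef hp hq ha hb hab
  have hB := aux_lemB f hmono hd X H hXpos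
  have hlin : (Matrix.trace ((Dmap f X H)ᴴ * H)).re
      = a * (Matrix.trace ((Dmap f X H)ᴴ * p.2)).re
        + b * (Matrix.trace ((Dmap f X H)ᴴ * q.2)).re := by
    rw [hH, mul_add, Matrix.mul_smul, Matrix.mul_smul, Matrix.trace_add,
      Matrix.trace_smul, Matrix.trace_smul, Complex.add_re, Complex.smul_re,
      Complex.smul_re]
    simp only [smul_eq_mul]
  have hconck := (hconc (Dmap f X H)).2 hp hq ha hb hab
  simp only [smul_eq_mul, ← hX] at hconck
  have hA1 := aux_lemA f hmono hd p.1 p.2 (Dmap f X H) hp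
  have hA2 := aux_lemA f hmono hd q.1 q.2 (Dmap f X H) hq
  have hm1 : a * (2 * (Matrix.trace ((Dmap f X H)ᴴ * p.2)).re
      - (Matrix.trace ((Dmap f X H)ᴴ * DmapInv f p.1 (Dmap f X H))).re)
      ≤ a * (Matrix.trace (p.2ᴴ * Dmap f p.1 p.2)).re :=
    mul_le_mul_of_nonneg_left hA1 ha
  have hm2 : b * (2 * (Matrix.trace ((Dmap f X H)ᴴ * q.2)).re
      - (Matrix.trace ((Dmap f X H)ᴴ * DmapInv f q.1 (Dmap f X H))).re)
      ≤ b * (Matrix.trace (q.2ᴴ * Dmap f q.1 q.2)).re :=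
    mul_le_mul_of_nonneg_left hA2 hb
  nlinarith [hB, hlin, hconck, hm1, hm2]
end

section
/- Let n be a natural number and let f:(0,∞)→ℝ be a strictly increasing continuously differentiable function. Suppose the map (x,h) ↦ Tr(h* D_f(x) h) is jointly convex in pairs (x,h) where x ranges over Hermitian positive definite n×n matrices and h over all n×n complex matrices. Then for every n×n complex matrix h, the map x ↦ Tr(h* D_f(x)⁻¹ h) is concave on the set of Hermitian positive definite n×n matrices. -/
open Matrix
open scoped ComplexOrder

namespace StmtAux

variable {n : ℕ}

lemma trace_ct_mul (x y : Matrix (Fin n) (Fin n) ℂ) :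
    (xᴴ * y).trace = ∑ i, ∑ j, starRingEnd ℂ (x j i) * y j i := by
  simp [Matrix.trace, Matrix.mul_apply, Matrix.conjTranspose_apply, Matrix.diag]

lemma trace_key (U a b : Matrix (Fin n) (Fin n) ℂ) (M : Fin n → Fin n → ℝ) :
    (aᴴ * (U * ((Matrix.of fun i j => ((M i j : ℝ) : ℂ)).hadamard (Uᴴ * b * U)) * Uᴴ)).trace
      = ∑ i, ∑ j, (M i j : ℂ) *
          (starRingEnd ℂ ((Uᴴ * a * U) i j) * ((Uᴴ * b * U) i j)) := by
  set C := (Matrix.of fun i j => ((M i j : ℝ) : ℂ)).hadamard (Uᴴ * b * U) with hC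
  have e1 : aᴴ * (U * C * Uᴴ) = (aᴴ * U) * C * Uᴴ := by
    simp only [Matrix.mul_assoc]
  have e2 : ((aᴴ * U) * C * Uᴴ).trace = ((Uᴴ * a * U)ᴴ * C).trace := by
    rw [Matrix.trace_mul_cycle]
    congr 1
    simp only [Matrix.conjTranspose_mul, Matrix.conjTranspose_conjTranspose, Matrix.mul_assoc]
  rw [e1, e2, trace_ct_mul]
  rw [Finset.sum_comm]
  refine Finset.sum_congr rfl fun i _ => Finset.sum_congr rfl fun j _ => ?_
  simp only [hC, Matrix.hadamard_apply, Matrix.of_apply]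
  ring

lemma conj_mul_self (z : ℂ) : starRingEnd ℂ z * z = ((Complex.normSq z : ℝ) : ℂ) := by
  rw [mul_comm, Complex.mul_conj]

lemma trace_key_re (U a : Matrix (Fin n) (Fin n) ℂ) (M : Fin n → Fin n → ℝ) :
    ((aᴴ * (U * ((Matrix.of fun i j => ((M i j : ℝ) : ℂ)).hadamard (Uᴴ * a * U)) * Uᴴ)).trace).re
      = ∑ i, ∑ j, M i j * Complex.normSq ((Uᴴ * a * U) i j) := by
  rw [trace_key, Complex.re_sum]
  refine Finset.sum_congr rfl fun i _ => ?_
  rw [Complex.re_sum]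
  refine Finset.sum_congr rfl fun j _ => ?_
  rw [conj_mul_self, ← Complex.ofReal_mul, Complex.ofReal_re]

lemma trace_ct_unitary (U a b : Matrix (Fin n) (Fin n) ℂ) (hU2 : U * Uᴴ = 1) :
    (aᴴ * b).trace = ((Uᴴ * a * U)ᴴ * (Uᴴ * b * U)).trace := by
  have : (Uᴴ * a * U)ᴴ * (Uᴴ * b * U) = Uᴴ * (aᴴ * b) * U := by
    simp only [Matrix.conjTranspose_mul, Matrix.conjTranspose_conjTranspose, Matrix.mul_assoc]
    congr 2
    rw [← Matrix.mul_assoc, hU2, Matrix.one_mul]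
  rw [this, Matrix.trace_mul_cycle, ← Matrix.mul_assoc, hU2, Matrix.one_mul]

lemma elem_ineq (c : ℝ) (hc : 0 < c) (z w : ℂ) :
    2 * (starRingEnd ℂ z * w).re ≤ c * Complex.normSq z + c⁻¹ * Complex.normSq w := by
  have h1 : (starRingEnd ℂ z * w).re = z.re * w.re + z.im * w.im := by
    simp [Complex.mul_re]
  have hc' : c * c⁻¹ = 1 := mul_inv_cancel₀ hc.ne'
  rw [h1, Complex.normSq_apply, Complex.normSq_apply]
  nlinarith [sq_nonneg (c * z.re - w.re), sq_nonneg (c * z.im - w.im), hc, mul_pos hc hc]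

lemma dd_pos {f : ℝ → ℝ} (hmono : StrictMonoOn f (Set.Ioi (0:ℝ)))
    (hderiv : ∀ t ∈ Set.Ioi (0:ℝ), 0 < deriv f t)
    {t s : ℝ} (ht : 0 < t) (hs : 0 < s) : 0 < dd f t s := by
  rcases eq_or_ne t s with rfl | hne
  · rw [dd, if_pos rfl]; exact hderiv t ht
  · rw [dd, if_neg hne]
    rcases hne.lt_or_gt with h | h
    · exact div_pos_of_neg_of_neg (by simpa using hmono ht hs h) (by linarith)
    · exact div_pos (by simpa [sub_pos] using hmono hs ht h) (by linarith)

lemma unitary_1 {x : Matrix (Fin n) (Fin n) ℂ} (hx : x.IsHermitian) :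
    (hx.eigenvectorUnitary : Matrix (Fin n) (Fin n) ℂ)ᴴ *
      (hx.eigenvectorUnitary : Matrix (Fin n) (Fin n) ℂ) = 1 := by
  rw [← Matrix.star_eq_conjTranspose]
  exact Matrix.UnitaryGroup.star_mul_self _

lemma unitary_2 {x : Matrix (Fin n) (Fin n) ℂ} (hx : x.IsHermitian) :
    (hx.eigenvectorUnitary : Matrix (Fin n) (Fin n) ℂ) *
      (hx.eigenvectorUnitary : Matrix (Fin n) (Fin n) ℂ)ᴴ = 1 := by
  rw [← Matrix.star_eq_conjTranspose]
  exact (Unitary.mem_iff.mp (hx.eigenvectorUnitary).2).2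

lemma smul_one_isHermitian (r : ℝ) :
    (r • (1 : Matrix (Fin n) (Fin n) ℂ)).IsHermitian := by
  rw [Matrix.IsHermitian, Matrix.conjTranspose_smul, star_trivial, Matrix.conjTranspose_one]

lemma eigenvalues_smul_one (r : ℝ)
    (hx : (r • (1 : Matrix (Fin n) (Fin n) ℂ)).IsHermitian) (i : Fin n) :
    hx.eigenvalues i = r := by
  have h : star (hx.eigenvectorUnitary : Matrix (Fin n) (Fin n) ℂ) *
      (r • (1 : Matrix (Fin n) (Fin n) ℂ)) * (hx.eigenvectorUnitary : Matrix (Fin n) (Fin n) ℂ)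
        = Matrix.diagonal (RCLike.ofReal ∘ hx.eigenvalues) := by
    have := hx.conjStarAlgAut_star_eigenvectorUnitary
    rwa [Unitary.conjStarAlgAut_star_apply] at this
  have h2 : star (hx.eigenvectorUnitary : Matrix (Fin n) (Fin n) ℂ) *
      (r • (1 : Matrix (Fin n) (Fin n) ℂ)) * (hx.eigenvectorUnitary : Matrix (Fin n) (Fin n) ℂ)
        = r • (1 : Matrix (Fin n) (Fin n) ℂ) := by
    rw [Matrix.mul_smul, Matrix.mul_one, Matrix.smul_mul, Matrix.star_eq_conjTranspose,
      unitary_1 hx]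
  rw [h2] at h
  have := congr_fun (congr_fun h.symm i) i
  simp only [Matrix.diagonal_apply_eq, Function.comp_apply, Matrix.smul_apply,
    Matrix.one_apply_eq, smul_eq_mul, mul_one] at this
  have h4 : (RCLike.ofReal (hx.eigenvalues i) : ℂ) = RCLike.ofReal r := by
    rw [this, Complex.real_smul, mul_one]
    rfl
  exact RCLike.ofReal_injective h4

lemma smul_posDef {a : ℝ} (ha : 0 < a) {x : Matrix (Fin n) (Fin n) ℂ} (hx : x.PosDef) :
    (a • x).PosDef := by
  refine ⟨?_, fun v hv => ?_⟩
  · rw [Matrix.IsHermitian, Matrix.conjTranspose_smul, star_trivial, hx.1.eq]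
  · exact (hx.smul ha).2 hv

lemma convex_posDef : Convex ℝ {x : Matrix (Fin n) (Fin n) ℂ | x.PosDef} := by
  intro x hx y hy a b ha hb hab
  rcases eq_or_lt_of_le ha with rfl | ha'
  · have hb1 : b = 1 := by linarith
    simpa [hb1] using hy
  rcases eq_or_lt_of_le hb with rfl | hb'
  · have ha1 : a = 1 := by linarith
    simpa [ha1] using hx
  exact (smul_posDef ha' hx).add (smul_posDef hb' hy)

lemma deriv_nonneg_of_mono {f : ℝ → ℝ} (hmono : StrictMonoOn f (Set.Ioi (0:ℝ)))
    (hsmooth : ContDiffOn ℝ 1 f (Set.Ioi (0:ℝ))) {t : ℝ} (ht : t ∈ Set.Ioi (0:ℝ)) :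
    0 ≤ deriv f t := by
  have hdiff : DifferentiableAt ℝ f t :=
    (hsmooth.differentiableOn one_ne_zero t ht).differentiableAt (isOpen_Ioi.mem_nhds ht)
  have h2 := (hdiff.hasDerivAt.hasDerivWithinAt (s := Set.Ioi t))
  rw [hasDerivWithinAt_iff_tendsto_slope] at h2
  have hset : Set.Ioi t \ {t} = Set.Ioi t := Set.diff_singleton_eq_self (by simp)
  rw [hset] at h2
  refine ge_of_tendsto h2 ?_
  filter_upwards [self_mem_nhdsWithin] with s hs
  have hs' : t < s := hs
  rw [slope_def_field]
  have : f t < f s := hmono ht (lt_trans ht hs') hs'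
  exact div_nonneg (by linarith) (by linarith)

lemma Dmap_smul_one (f : ℝ → ℝ) (r : ℝ) (k : Matrix (Fin n) (Fin n) ℂ) :
    Dmap f (r • (1 : Matrix (Fin n) (Fin n) ℂ)) k = ((deriv f r : ℝ) : ℂ) • k := by
  have hx := smul_one_isHermitian (n := n) r
  rw [Dmap, dif_pos hx]
  set U := (hx.eigenvectorUnitary : Matrix (Fin n) (Fin n) ℂ) with hU
  have hM : (Matrix.of fun i j => ((dd f (hx.eigenvalues i) (hx.eigenvalues j) : ℝ) : ℂ)).hadamard
      (Uᴴ * k * U) = ((deriv f r : ℝ) : ℂ) • (Uᴴ * k * U) := by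
    ext i j
    simp only [Matrix.hadamard_apply, Matrix.of_apply, Matrix.smul_apply,
      eigenvalues_smul_one r hx, dd, if_pos rfl, eq_self_iff_true, if_true, smul_eq_mul]
  rw [hM, Matrix.mul_smul, Matrix.smul_mul]
  congr 1
  calc U * (Uᴴ * k * U) * Uᴴ = (U * Uᴴ) * k * (U * Uᴴ) := by
        simp only [Matrix.mul_assoc]
    _ = k := by rw [unitary_2 hx, Matrix.one_mul, Matrix.mul_one]

lemma Q_smul_one (f : ℝ → ℝ) (r : ℝ) (k : Matrix (Fin n) (Fin n) ℂ) :
    ((kᴴ * Dmap f (r • (1 : Matrix (Fin n) (Fin n) ℂ)) k).trace).re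
      = deriv f r * ((kᴴ * k).trace).re := by
  rw [Dmap_smul_one, Matrix.mul_smul, Matrix.trace_smul]
  simp [Complex.real_smul, Complex.mul_re]

lemma deriv_pos_of_hconv (hn : n ≠ 0) {f : ℝ → ℝ}
    (hmono : StrictMonoOn f (Set.Ioi (0:ℝ)))
    (hsmooth : ContDiffOn ℝ 1 f (Set.Ioi (0:ℝ)))
    (hconv : ConvexOn ℝ {p : Matrix (Fin n) (Fin n) ℂ × Matrix (Fin n) (Fin n) ℂ | p.1.PosDef}
      (fun p => (Matrix.trace (p.2ᴴ * Dmap f p.1 p.2)).re)) :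
    ∀ t ∈ Set.Ioi (0:ℝ), 0 < deriv f t := by
  intro t ht
  rcases (deriv_nonneg_of_mono hmono hsmooth ht).lt_or_eq with hlt | heq
  · exact hlt
  exfalso
  have ht' : (0:ℝ) < t := ht
  have hnpos : (0:ℝ) < (n : ℝ) := by
    exact_mod_cast Nat.pos_of_ne_zero hn
  have key : ∀ s : ℝ, 0 < s → s < 1 → deriv f (t + s) = 0 := by
    intro s hs0 hs1
    have hp0 : ((t • (1 : Matrix (Fin n) (Fin n) ℂ), (1 : Matrix (Fin n) (Fin n) ℂ)) :
        Matrix (Fin n) (Fin n) ℂ × Matrix (Fin n) (Fin n) ℂ) ∈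
        {p : Matrix (Fin n) (Fin n) ℂ × Matrix (Fin n) (Fin n) ℂ | p.1.PosDef} :=
      smul_posDef ht' Matrix.PosDef.one
    have hp1 : ((((t+1) • (1 : Matrix (Fin n) (Fin n) ℂ)), (0 : Matrix (Fin n) (Fin n) ℂ)) :
        Matrix (Fin n) (Fin n) ℂ × Matrix (Fin n) (Fin n) ℂ) ∈
        {p : Matrix (Fin n) (Fin n) ℂ × Matrix (Fin n) (Fin n) ℂ | p.1.PosDef} :=
      smul_posDef (by linarith) Matrix.PosDef.one
    have hcc := hconv.2 hp0 hp1 (by linarith : (0:ℝ) ≤ 1 - s) (le_of_lt hs0) (by ring)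
    have hcomb : (1 - s) • ((t • (1 : Matrix (Fin n) (Fin n) ℂ),
          (1 : Matrix (Fin n) (Fin n) ℂ)) :
          Matrix (Fin n) (Fin n) ℂ × Matrix (Fin n) (Fin n) ℂ)
        + s • ((((t+1) • (1 : Matrix (Fin n) (Fin n) ℂ)), (0 : Matrix (Fin n) (Fin n) ℂ)) :
          Matrix (Fin n) (Fin n) ℂ × Matrix (Fin n) (Fin n) ℂ)
        = ((t + s) • (1 : Matrix (Fin n) (Fin n) ℂ), (1 - s) • (1 : Matrix (Fin n) (Fin n) ℂ)) := by
      rw [Prod.smul_mk, Prod.smul_mk, Prod.mk_add_mk]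
      congr 1
      · rw [smul_smul, smul_smul, ← add_smul]
        congr 1
        ring
      · rw [smul_zero, add_zero]
    rw [hcomb] at hcc
    simp only at hcc
    rw [Q_smul_one, Q_smul_one, Q_smul_one, ← heq] at hcc
    have htr1 : (((1 : Matrix (Fin n) (Fin n) ℂ)ᴴ * 1).trace).re = (n : ℝ) := by
      simp [Matrix.trace_one]
    have htr0 : (((0 : Matrix (Fin n) (Fin n) ℂ)ᴴ * 0).trace).re = 0 := by
      simp
    have htrs : ((((1-s) • (1 : Matrix (Fin n) (Fin n) ℂ))ᴴ *
        ((1-s) • (1 : Matrix (Fin n) (Fin n) ℂ))).trace).re = (1-s)^2 * (n : ℝ) := by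
      rw [Matrix.conjTranspose_smul, star_trivial, Matrix.conjTranspose_one,
        Matrix.smul_mul, Matrix.mul_smul, Matrix.one_mul, Matrix.trace_smul,
        Matrix.trace_smul, Matrix.trace_one]
      simp [Complex.real_smul, Complex.mul_re]
      ring
    rw [htr1, htr0, htrs] at hcc
    simp only [smul_eq_mul, mul_zero, zero_mul, add_zero, zero_add] at hcc
    have hnn : 0 ≤ deriv f (t + s) :=
      deriv_nonneg_of_mono hmono hsmooth (by simp; linarith)
    have hfac : 0 < (1-s)^2 * (n:ℝ) := mul_pos (pow_pos (by linarith) 2) hnpos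
    have h1 : deriv f (t+s) * ((1-s)^2 * (n:ℝ)) ≤ 0 := by linarith
    have h2 : 0 ≤ deriv f (t+s) * ((1-s)^2 * (n:ℝ)) := mul_nonneg hnn hfac.le
    have h3 : deriv f (t+s) * ((1-s)^2 * (n:ℝ)) = 0 := le_antisymm h1 h2
    exact (mul_eq_zero.mp h3).resolve_right hfac.ne'
  -- MVT contradiction
  have hab : t + 1/4 < t + 1/2 := by linarith
  have hs1 : Set.Icc (t+1/4) (t+1/2) ⊆ Set.Ioi (0:ℝ) := by
    intro u hu
    simp only [Set.mem_Icc] at hu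
    simp only [Set.mem_Ioi]
    linarith [hu.1]
  have hcont : ContinuousOn f (Set.Icc (t+1/4) (t+1/2)) :=
    hsmooth.continuousOn.mono hs1
  have hder : ∀ u ∈ Set.Ioo (t+1/4) (t+1/2), HasDerivAt f (deriv f u) u := by
    intro u hu
    have hu' : u ∈ Set.Ioi (0:ℝ) := by
      simp only [Set.mem_Ioi]; linarith [hu.1]
    exact ((hsmooth.differentiableOn one_ne_zero u hu').differentiableAt
      (isOpen_Ioi.mem_nhds hu')).hasDerivAt
  obtain ⟨c, hc, hceq⟩ := exists_hasDerivAt_eq_slope f (deriv f) hab hcont hder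
  have hc0 : deriv f c = 0 := by
    have := key (c - t) (by linarith [hc.1]) (by linarith [hc.2])
    have h5 : t + (c - t) = c := by ring
    rwa [h5] at this
  rw [hc0] at hceq
  have hfb : f (t+1/4) < f (t+1/2) :=
    hmono (by simp only [Set.mem_Ioi]; linarith) (by simp only [Set.mem_Ioi]; linarith) hab
  have hne : t + 1/2 - (t + 1/4) ≠ 0 := by norm_num
  have h6 : (f (t+1/2) - f (t+1/4)) / (t+1/2 - (t+1/4)) = 0 := hceq.symm
  rcases div_eq_zero_iff.mp h6 with h7 | h7
  · linarith
  · norm_num at h7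

lemma DmapInv_trace_re (f : ℝ → ℝ) (x h : Matrix (Fin n) (Fin n) ℂ) (hx : x.IsHermitian) :
    ((hᴴ * DmapInv f x h).trace).re
      = ∑ i, ∑ j, (dd f (hx.eigenvalues i) (hx.eigenvalues j))⁻¹ *
          Complex.normSq (((hx.eigenvectorUnitary : Matrix (Fin n) (Fin n) ℂ)ᴴ * h *
            (hx.eigenvectorUnitary : Matrix (Fin n) (Fin n) ℂ)) i j) := by
  rw [DmapInv, dif_pos hx]
  exact trace_key_re _ _ (fun i j => (dd f (hx.eigenvalues i) (hx.eigenvalues j))⁻¹)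

lemma Dmap_trace_re (f : ℝ → ℝ) (x k : Matrix (Fin n) (Fin n) ℂ) (hx : x.IsHermitian) :
    ((kᴴ * Dmap f x k).trace).re
      = ∑ i, ∑ j, dd f (hx.eigenvalues i) (hx.eigenvalues j) *
          Complex.normSq (((hx.eigenvectorUnitary : Matrix (Fin n) (Fin n) ℂ)ᴴ * k *
            (hx.eigenvectorUnitary : Matrix (Fin n) (Fin n) ℂ)) i j) := by
  rw [Dmap, dif_pos hx]
  exact trace_key_re _ _ (fun i j => dd f (hx.eigenvalues i) (hx.eigenvalues j))

lemma k0_tilde (f : ℝ → ℝ) (x h : Matrix (Fin n) (Fin n) ℂ) (hx : x.IsHermitian) :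
    (hx.eigenvectorUnitary : Matrix (Fin n) (Fin n) ℂ)ᴴ * DmapInv f x h *
        (hx.eigenvectorUnitary : Matrix (Fin n) (Fin n) ℂ)
      = (Matrix.of fun i j => (((dd f (hx.eigenvalues i) (hx.eigenvalues j))⁻¹ : ℝ) : ℂ)).hadamard
          ((hx.eigenvectorUnitary : Matrix (Fin n) (Fin n) ℂ)ᴴ * h *
            (hx.eigenvectorUnitary : Matrix (Fin n) (Fin n) ℂ)) := by
  rw [DmapInv, dif_pos hx]
  set U := (hx.eigenvectorUnitary : Matrix (Fin n) (Fin n) ℂ)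
  set C := (Matrix.of fun i j => (((dd f (hx.eigenvalues i) (hx.eigenvalues j))⁻¹ : ℝ) : ℂ)).hadamard
      (Uᴴ * h * U)
  calc Uᴴ * (U * C * Uᴴ) * U = (Uᴴ * U) * C * (Uᴴ * U) := by simp only [Matrix.mul_assoc]
    _ = C := by rw [unitary_1 hx, Matrix.one_mul, Matrix.mul_one]

lemma cross_trace_re (x k h : Matrix (Fin n) (Fin n) ℂ) (hx : x.IsHermitian) :
    ((kᴴ * h).trace).re
      = ∑ i, ∑ j, (starRingEnd ℂ
          (((hx.eigenvectorUnitary : Matrix (Fin n) (Fin n) ℂ)ᴴ * k *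
            (hx.eigenvectorUnitary : Matrix (Fin n) (Fin n) ℂ)) i j) *
          (((hx.eigenvectorUnitary : Matrix (Fin n) (Fin n) ℂ)ᴴ * h *
            (hx.eigenvectorUnitary : Matrix (Fin n) (Fin n) ℂ)) i j)).re := by
  rw [trace_ct_unitary _ k h (unitary_2 hx), trace_ct_mul, Finset.sum_comm, Complex.re_sum]
  refine Finset.sum_congr rfl fun i _ => ?_
  rw [Complex.re_sum]

lemma F_le_target {f : ℝ → ℝ} (hmono : StrictMonoOn f (Set.Ioi (0:ℝ)))
    (hd : ∀ t ∈ Set.Ioi (0:ℝ), 0 < deriv f t)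
    (h x k : Matrix (Fin n) (Fin n) ℂ) (hPD : x.PosDef) :
    2 * ((kᴴ * h).trace).re - ((kᴴ * Dmap f x k).trace).re
      ≤ ((hᴴ * DmapInv f x h).trace).re := by
  have hx := hPD.1
  set U := (hx.eigenvectorUnitary : Matrix (Fin n) (Fin n) ℂ) with hU
  have hddpos : ∀ i j, 0 < dd f (hx.eigenvalues i) (hx.eigenvalues j) := fun i j =>
    dd_pos hmono hd (hPD.eigenvalues_pos i) (hPD.eigenvalues_pos j)
  have hsum : ∑ i, ∑ j, 2 * (starRingEnd ℂ ((Uᴴ * k * U) i j) * ((Uᴴ * h * U) i j)).re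
      ≤ ∑ i, ∑ j, (dd f (hx.eigenvalues i) (hx.eigenvalues j) *
            Complex.normSq ((Uᴴ * k * U) i j)
          + (dd f (hx.eigenvalues i) (hx.eigenvalues j))⁻¹ *
            Complex.normSq ((Uᴴ * h * U) i j)) := by
    refine Finset.sum_le_sum fun i _ => Finset.sum_le_sum fun j _ => ?_
    exact elem_ineq _ (hddpos i j) _ _
  rw [cross_trace_re x k h hx, Dmap_trace_re f x k hx, DmapInv_trace_re f x h hx]
  have e1 : (2:ℝ) * ∑ i, ∑ j, (starRingEnd ℂ ((Uᴴ * k * U) i j) * ((Uᴴ * h * U) i j)).re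
      = ∑ i, ∑ j, 2 * (starRingEnd ℂ ((Uᴴ * k * U) i j) * ((Uᴴ * h * U) i j)).re := by
    rw [Finset.mul_sum]
    exact Finset.sum_congr rfl fun i _ => by rw [Finset.mul_sum]
  have e2 : ∑ i, ∑ j, (dd f (hx.eigenvalues i) (hx.eigenvalues j) *
            Complex.normSq ((Uᴴ * k * U) i j)
          + (dd f (hx.eigenvalues i) (hx.eigenvalues j))⁻¹ *
            Complex.normSq ((Uᴴ * h * U) i j))
      = (∑ i, ∑ j, dd f (hx.eigenvalues i) (hx.eigenvalues j) *
            Complex.normSq ((Uᴴ * k * U) i j))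
        + ∑ i, ∑ j, (dd f (hx.eigenvalues i) (hx.eigenvalues j))⁻¹ *
            Complex.normSq ((Uᴴ * h * U) i j) := by
    rw [← Finset.sum_add_distrib]
    exact Finset.sum_congr rfl fun i _ => by rw [← Finset.sum_add_distrib]
  rw [e1]
  rw [e2] at hsum
  linarith

lemma F_eq_target {f : ℝ → ℝ} (hmono : StrictMonoOn f (Set.Ioi (0:ℝ)))
    (hd : ∀ t ∈ Set.Ioi (0:ℝ), 0 < deriv f t)
    (h x : Matrix (Fin n) (Fin n) ℂ) (hPD : x.PosDef) :
    2 * (((DmapInv f x h)ᴴ * h).trace).re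
        - (((DmapInv f x h)ᴴ * Dmap f x (DmapInv f x h)).trace).re
      = ((hᴴ * DmapInv f x h).trace).re := by
  have hx := hPD.1
  set U := (hx.eigenvectorUnitary : Matrix (Fin n) (Fin n) ℂ) with hU
  have hddpos : ∀ i j, 0 < dd f (hx.eigenvalues i) (hx.eigenvalues j) := fun i j =>
    dd_pos hmono hd (hPD.eigenvalues_pos i) (hPD.eigenvalues_pos j)
  have hsw : (((DmapInv f x h)ᴴ * h).trace).re = ((hᴴ * DmapInv f x h).trace).re := by
    have e : (DmapInv f x h)ᴴ * h = (hᴴ * DmapInv f x h)ᴴ := by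
      rw [Matrix.conjTranspose_mul, Matrix.conjTranspose_conjTranspose]
    rw [e, Matrix.trace_conjTranspose]
    simp
  have hQ : (((DmapInv f x h)ᴴ * Dmap f x (DmapInv f x h)).trace).re
      = ((hᴴ * DmapInv f x h).trace).re := by
    rw [Dmap_trace_re f x (DmapInv f x h) hx, DmapInv_trace_re f x h hx, ← hU, k0_tilde f x h hx]
    refine Finset.sum_congr rfl fun i _ => Finset.sum_congr rfl fun j _ => ?_
    rw [Matrix.hadamard_apply, Matrix.of_apply]
    rw [Complex.normSq_mul, Complex.normSq_ofReal]
    have hc := hddpos i j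
    field_simp
    rw [hU]
  rw [hsw, hQ]
  ring

end StmtAux

open StmtAux in
/-- If `(x,h) ↦ Tr h* D_f(x) h` is jointly convex, then `x ↦ Tr h* D_f(x)⁻¹ h` is concave
on positive definite matrices for every `h`. -/
theorem stmt_1 (n : ℕ) (f : ℝ → ℝ)
    (hmono : StrictMonoOn f (Set.Ioi (0 : ℝ)))
    (hsmooth : ContDiffOn ℝ 1 f (Set.Ioi (0 : ℝ)))
    (hconv : ConvexOn ℝ {p : Matrix (Fin n) (Fin n) ℂ × Matrix (Fin n) (Fin n) ℂ | p.1.PosDef}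
      (fun p => (Matrix.trace (p.2ᴴ * Dmap f p.1 p.2)).re)) :
    ∀ h : Matrix (Fin n) (Fin n) ℂ,
      ConcaveOn ℝ {x : Matrix (Fin n) (Fin n) ℂ | x.PosDef}
        (fun x => (Matrix.trace (hᴴ * DmapInv f x h)).re) := by
  intro h
  refine ⟨convex_posDef, ?_⟩
  intro x hx y hy a b ha hb hab
  simp only [Set.mem_setOf_eq] at hx hy
  by_cases hn : n = 0
  · subst hn
    simp [Matrix.trace, Finset.univ_eq_empty]
  have hd := deriv_pos_of_hconv hn hmono hsmooth hconv
  have hz : (a • x + b • y).PosDef := convex_posDef hx hy ha hb hab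
  set kx := DmapInv f x h with hkx
  set ky := DmapInv f y h with hky
  have h1x := F_eq_target hmono hd h x hx
  have h1y := F_eq_target hmono hd h y hy
  have h2 := F_le_target hmono hd h (a • x + b • y) (a • kx + b • ky) hz
  have hmx : ((x, kx) : Matrix (Fin n) (Fin n) ℂ × Matrix (Fin n) (Fin n) ℂ) ∈
      {p : Matrix (Fin n) (Fin n) ℂ × Matrix (Fin n) (Fin n) ℂ | p.1.PosDef} := hx
  have hmy : ((y, ky) : Matrix (Fin n) (Fin n) ℂ × Matrix (Fin n) (Fin n) ℂ) ∈
      {p : Matrix (Fin n) (Fin n) ℂ × Matrix (Fin n) (Fin n) ℂ | p.1.PosDef} := hy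
  have hcvx := hconv.2 hmx hmy ha hb hab
  simp only [Prod.smul_mk, Prod.mk_add_mk, smul_eq_mul] at hcvx
  have hlin : (((a • kx + b • ky)ᴴ * h).trace).re
      = a * ((kxᴴ * h).trace).re + b * ((kyᴴ * h).trace).re := by
    rw [Matrix.conjTranspose_add, Matrix.conjTranspose_smul, Matrix.conjTranspose_smul,
      star_trivial, star_trivial, Matrix.add_mul, Matrix.smul_mul, Matrix.smul_mul,
      Matrix.trace_add, Matrix.trace_smul, Matrix.trace_smul]
    simp [Complex.add_re, Complex.real_smul, Complex.mul_re]
  simp only [smul_eq_mul]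
  simp only [← hkx, ← hky] at h1x h1y h2 ⊢
  have h1x' : a * (2 * ((kxᴴ * h).trace).re - ((kxᴴ * Dmap f x kx).trace).re)
      = a * ((hᴴ * kx).trace).re := by rw [h1x]
  have h1y' : b * (2 * ((kyᴴ * h).trace).re - ((kyᴴ * Dmap f y ky).trace).re)
      = b * ((hᴴ * ky).trace).re := by rw [h1y]
  nlinarith [h1x', h1y', h2, hcvx, hlin, ha, hb]
end

section
/- Let n be a natural number and let f₁, f₂:(0,∞)→ℝ be strictly increasing continuously differentiable functions such that for each k ∈ {1,2} and every n×n complex matrix h, the map x ↦ Tr(h* D_{f_k}(x)⁻¹ h) is concave on Hermitian positive definite n×n matrices. Then for every n×n complex matrix h the map x ↦ Tr(h* D_{f₁+f₂}(x)⁻¹ h) is concave on Hermitian positive definite n×n matrices; consequently the class Φ_n of representing functions of matrix entropies of order n is a convex cone. -/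
open Matrix
open scoped ComplexOrder

set_option linter.unusedSectionVars false

section Aux

variable {m : Type*} [Fintype m] [DecidableEq m]

lemma conj_mul_re (u : ℂ) (r : ℝ) : ((starRingEnd ℂ) u * ((r:ℂ) * u)).re = ‖u‖^2 * r := by
  have h : (starRingEnd ℂ) u * ((r:ℂ) * u) = (r:ℂ) * ((Complex.normSq u : ℝ) : ℂ) := by
    rw [← Complex.mul_conj]; ring
  rw [h, Complex.sq_norm]
  simp [Complex.ofReal_mul]
  ring

lemma trace_dminv (f : ℝ → ℝ) (x h : Matrix m m ℂ) (hx : x.IsHermitian) :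
    (Matrix.trace (hᴴ * DmapInv f x h)).re =
      ∑ i, ∑ j, ‖((hx.eigenvectorUnitary : Matrix m m ℂ)ᴴ * h *
          (hx.eigenvectorUnitary : Matrix m m ℂ)) j i‖^2 *
        (dd f (hx.eigenvalues j) (hx.eigenvalues i))⁻¹ := by
  set U : Matrix m m ℂ := (hx.eigenvectorUnitary : Matrix m m ℂ) with hUdef
  set k : Matrix m m ℂ := Uᴴ * h * U with hkdef
  set A : Matrix m m ℂ :=
    (Matrix.of fun i j => (((dd f (hx.eigenvalues i) (hx.eigenvalues j))⁻¹ : ℝ) : ℂ)).hadamard k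
    with hAdef
  have hUU : Uᴴ * U = 1 := by
    rw [← Matrix.star_eq_conjTranspose]
    exact (Matrix.mem_unitaryGroup_iff').mp hx.eigenvectorUnitary.2
  have h1 : hᴴ * DmapInv f x h = hᴴ * (U * A * Uᴴ) := by
    rw [DmapInv, dif_pos hx]
  rw [h1]
  have h2 : Matrix.trace (hᴴ * (U * A * Uᴴ)) = Matrix.trace (kᴴ * A) := by
    rw [show hᴴ * (U * A * Uᴴ) = (hᴴ * U * A) * Uᴴ by simp only [Matrix.mul_assoc],
      Matrix.trace_mul_comm, hkdef]
    rw [Matrix.conjTranspose_mul, Matrix.conjTranspose_mul, Matrix.conjTranspose_conjTranspose]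
    simp only [Matrix.mul_assoc]
  rw [h2]
  rw [Matrix.trace]
  rw [Complex.re_sum]
  refine Finset.sum_congr rfl fun i _ => ?_
  rw [Matrix.diag_apply, Matrix.mul_apply, Complex.re_sum]
  refine Finset.sum_congr rfl fun j _ => ?_
  rw [Matrix.conjTranspose_apply, hAdef, Matrix.hadamard_apply, Matrix.of_apply]
  rw [show star (k j i) = (starRingEnd ℂ) (k j i) from rfl]
  rw [conj_mul_re]

lemma my_smul_one_eq_diagonal (t : ℝ) :
    (t • (1 : Matrix m m ℂ)) = Matrix.diagonal (fun _ => (t : ℂ)) := by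
  ext i j
  by_cases h : i = j <;>
    simp [Matrix.smul_apply, Matrix.one_apply, Matrix.diagonal_apply, h, Complex.real_smul]

lemma posDef_smul_one {t : ℝ} (ht : 0 < t) : (t • (1 : Matrix m m ℂ)).PosDef := by
  rw [my_smul_one_eq_diagonal]
  exact Matrix.PosDef.diagonal fun _ => by positivity

lemma eig_smul_one {t : ℝ} (hx : (t • (1 : Matrix m m ℂ)).IsHermitian) (i : m) :
    hx.eigenvalues i = t := by
  set U : Matrix m m ℂ := (hx.eigenvectorUnitary : Matrix m m ℂ) with hUdef
  have hUU : star U * U = 1 := (Matrix.mem_unitaryGroup_iff').mp hx.eigenvectorUnitary.2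
  have hst := hx.spectral_theorem
  have hd : Matrix.diagonal (RCLike.ofReal ∘ hx.eigenvalues) = t • (1 : Matrix m m ℂ) := by
    have h := congrArg (fun M => star U * M * U) hst
    simp only [Unitary.conjStarAlgAut_apply, Unitary.coe_star] at h
    rw [show star U * (U * Matrix.diagonal (RCLike.ofReal ∘ hx.eigenvalues) * star U) * U =
        (star U * U) * Matrix.diagonal (RCLike.ofReal ∘ hx.eigenvalues) * (star U * U) by
      simp only [Matrix.mul_assoc], hUU, Matrix.one_mul, Matrix.mul_one] at h
    rw [← h]
    rw [Matrix.mul_smul, Matrix.mul_one, Matrix.smul_mul, hUU]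
  have h := congrFun (congrFun hd i) i
  simp only [Matrix.diagonal_apply_eq, Function.comp_apply, Matrix.smul_apply,
    Matrix.one_apply_eq, Complex.real_smul, mul_one] at h
  exact RCLike.ofReal_inj.mp h

lemma trace_dminv_one (f : ℝ → ℝ) {t : ℝ} (ht : 0 < t) :
    (Matrix.trace ((1 : Matrix m m ℂ)ᴴ * DmapInv f (t • 1) 1)).re =
      (Fintype.card m) * (deriv f t)⁻¹ := by
  have hx : (t • (1 : Matrix m m ℂ)).IsHermitian := (posDef_smul_one ht).1
  rw [trace_dminv f _ 1 hx]
  have hUU : (hx.eigenvectorUnitary : Matrix m m ℂ)ᴴ * (hx.eigenvectorUnitary : Matrix m m ℂ)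
      = 1 := by
    rw [← Matrix.star_eq_conjTranspose]
    exact (Matrix.mem_unitaryGroup_iff').mp hx.eigenvectorUnitary.2
  have hk : (hx.eigenvectorUnitary : Matrix m m ℂ)ᴴ * (1 : Matrix m m ℂ) *
      (hx.eigenvectorUnitary : Matrix m m ℂ) = 1 := by
    rw [Matrix.mul_one, hUU]
  rw [hk]
  have : ∀ i j : m, ‖(1 : Matrix m m ℂ) j i‖^2 *
      (dd f (hx.eigenvalues j) (hx.eigenvalues i))⁻¹ =
      if j = i then (deriv f t)⁻¹ else 0 := by
    intro i j
    by_cases hji : j = i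
    · subst hji
      simp [Matrix.one_apply_eq, eig_smul_one hx, dd]
    · simp [Matrix.one_apply_ne hji, hji]
  simp_rw [this]
  simp [Finset.sum_ite_eq, Finset.card_univ]

lemma deriv_nonneg_of_strictMonoOn {f : ℝ → ℝ} (hmono : StrictMonoOn f (Set.Ioi 0))
    {s : ℝ} (hs : 0 < s) (hd : DifferentiableAt ℝ f s) : 0 ≤ deriv f s := by
  have h := hd.hasDerivAt
  rw [hasDerivAt_iff_tendsto_slope] at h
  have h2 : Filter.Tendsto (slope f s) (nhdsWithin s (Set.Ioi s)) (nhds (deriv f s)) :=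
    h.mono_left (nhdsWithin_mono s fun x hx => ne_of_gt hx)
  refine ge_of_tendsto h2 ?_
  filter_upwards [self_mem_nhdsWithin] with x hx
  have hxs : s < x := hx
  have hlt := hmono (Set.mem_Ioi.mpr hs) (Set.mem_Ioi.mpr (lt_trans hs hxs)) hxs
  rw [slope_def_field]
  apply div_nonneg <;> linarith

lemma deriv_pos_of_concave [Nonempty m] {f : ℝ → ℝ}
    (hmono : StrictMonoOn f (Set.Ioi 0)) (hsmooth : ContDiffOn ℝ 1 f (Set.Ioi 0))
    (hconc : ConcaveOn ℝ {x : Matrix m m ℂ | x.PosDef}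
      (fun x => (Matrix.trace ((1 : Matrix m m ℂ)ᴴ * DmapInv f x 1)).re))
    {t : ℝ} (ht : 0 < t) : 0 < deriv f t := by
  have hdiff : ∀ s : ℝ, 0 < s → DifferentiableAt ℝ f s := fun s hs =>
    ((hsmooth.differentiableOn one_ne_zero).differentiableAt (isOpen_Ioi.mem_nhds hs))
  have hnn : ∀ s : ℝ, 0 < s → 0 ≤ deriv f s := fun s hs =>
    deriv_nonneg_of_strictMonoOn hmono hs (hdiff s hs)
  have hN : 0 < (Fintype.card m : ℝ) := by exact_mod_cast Fintype.card_pos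
  by_contra hle
  have ht0 : deriv f t = 0 := le_antisymm (not_lt.mp hle) (hnn t ht)
  have key : ∀ v : ℝ, t < v → deriv f v = 0 := by
    intro v hv
    have hw : (0:ℝ) < t / 2 := by linarith
    have hv0 : (0:ℝ) < v := by linarith
    have hvw : (0:ℝ) < v - t / 2 := by linarith
    set lam : ℝ := (v - t) / (v - t / 2) with hlamdef
    set mu : ℝ := (t - t / 2) / (v - t / 2) with hmudef
    have hlam : 0 < lam := by apply div_pos <;> linarith
    have hmu : 0 < mu := by apply div_pos <;> linarith
    have hsum : lam + mu = 1 := by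
      rw [hlamdef, hmudef, ← add_div, div_eq_one_iff_eq (ne_of_gt hvw)]
      ring
    have hcombo : lam • ((t/2) • (1 : Matrix m m ℂ)) + mu • (v • (1 : Matrix m m ℂ))
        = t • (1 : Matrix m m ℂ) := by
      rw [smul_smul, smul_smul, ← add_smul]
      congr 1
      rw [hlamdef, hmudef, div_mul_eq_mul_div, div_mul_eq_mul_div, ← add_div,
        div_eq_iff (ne_of_gt hvw)]
      ring
    have hmem1 : ((t/2) • (1 : Matrix m m ℂ)) ∈ {x : Matrix m m ℂ | x.PosDef} :=
      posDef_smul_one hw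
    have hmem2 : (v • (1 : Matrix m m ℂ)) ∈ {x : Matrix m m ℂ | x.PosDef} :=
      posDef_smul_one hv0
    have happ := hconc.2 hmem1 hmem2 hlam.le hmu.le hsum
    rw [hcombo] at happ
    simp only [smul_eq_mul] at happ
    rw [trace_dminv_one f hw, trace_dminv_one f hv0, trace_dminv_one f ht, ht0, _root_.inv_zero,
      mul_zero] at happ
    have hiw : 0 ≤ (deriv f (t/2))⁻¹ := inv_nonneg.mpr (hnn _ hw)
    have hiv : 0 ≤ (deriv f v)⁻¹ := inv_nonneg.mpr (hnn _ hv0)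
    by_contra hne
    have hdv : 0 < deriv f v := lt_of_le_of_ne (hnn v hv0) (Ne.symm hne)
    have : 0 < (deriv f v)⁻¹ := inv_pos.mpr hdv
    nlinarith [mul_pos hmu (mul_pos hN this), mul_nonneg hlam.le (mul_nonneg hN.le hiw)]
  have hcont : ContinuousOn f (Set.Icc (t+1) (t+2)) := by
    apply (hsmooth.continuousOn).mono
    intro s hs
    simp only [Set.mem_Icc] at hs
    exact Set.mem_Ioi.mpr (by linarith [hs.1])
  obtain ⟨c, hc, hceq⟩ := exists_deriv_eq_slope f (show t+1 < t+2 by linarith) hcont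
    (fun s hs => (hdiff s (by simp only [Set.mem_Ioo] at hs; linarith [hs.1])).differentiableWithinAt)
  have hc0 : deriv f c = 0 := key c (by simp only [Set.mem_Ioo] at hc; linarith [hc.1])
  have hslope : 0 < (f (t+2) - f (t+1)) / (t + 2 - (t + 1)) := by
    have := hmono (Set.mem_Ioi.mpr (by linarith : (0:ℝ) < t+1))
      (Set.mem_Ioi.mpr (by linarith : (0:ℝ) < t+2)) (by linarith)
    apply div_pos <;> linarith
  rw [hceq] at hc0
  linarith [hslope, hc0.symm.le, hc0.le]

lemma posDef_combo {x y : Matrix m m ℂ} (hx : x.PosDef) (hy : y.PosDef) {a b : ℝ}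
    (ha : 0 ≤ a) (hb : 0 ≤ b) (hab : a + b = 1) : (a • x + b • y).PosDef := by
  rcases eq_or_lt_of_le ha with ha0 | ha0
  · have : b = 1 := by linarith
    simp [← ha0, this, hy]
  rcases eq_or_lt_of_le hb with hb0 | hb0
  · have : a = 1 := by linarith
    simp [← hb0, this, hx]
  constructor
  · have h1 : (a • x)ᴴ = a • x := by
      rw [Matrix.conjTranspose_smul]
      simp [hx.1.eq]
    have h2 : (b • y)ᴴ = b • y := by
      rw [Matrix.conjTranspose_smul]
      simp [hy.1.eq]
    rw [Matrix.IsHermitian, Matrix.conjTranspose_add, h1, h2]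
  · exact ((hx.smul ha0).add (hy.smul hb0)).2

lemma dd_pos {f : ℝ → ℝ} (hf : StrictMonoOn f (Set.Ioi 0))
    (hder : ∀ t ∈ Set.Ioi (0:ℝ), 0 < deriv f t) {t s : ℝ} (ht : 0 < t) (hs : 0 < s) :
    0 < dd f t s := by
  unfold dd
  split_ifs with h
  · exact hder t ht
  · rcases lt_or_gt_of_ne h with h' | h'
    · have := hf ht hs h'
      apply div_pos_of_neg_of_neg <;> linarith
    · have := hf hs ht h'
      apply div_pos <;> linarith

lemma dd_add (f g : ℝ → ℝ) (t s : ℝ) (hft : DifferentiableAt ℝ f t)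
    (hgt : DifferentiableAt ℝ g t) :
    dd (fun u => f u + g u) t s = dd f t s + dd g t s := by
  unfold dd
  split_ifs with h
  · exact deriv_add hft hgt
  · rw [show f t + g t - (f s + g s) = (f t - f s) + (g t - g s) by ring, add_div]

lemma dd_smul (c : ℝ) (f : ℝ → ℝ) (t s : ℝ) (hft : DifferentiableAt ℝ f t) :
    dd (fun u => c * f u) t s = c * dd f t s := by
  unfold dd
  split_ifs with h
  · exact deriv_const_mul c hft
  · rw [show c * f t - c * f s = c * (f t - f s) by ring, mul_div_assoc]

lemma diffAt {f : ℝ → ℝ} (hs : ContDiffOn ℝ 1 f (Set.Ioi 0)) {t : ℝ} (ht : 0 < t) :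
    DifferentiableAt ℝ f t :=
  ((hs.differentiableOn one_ne_zero).differentiableAt (isOpen_Ioi.mem_nhds ht))

lemma scalar_ineq {a b : ℝ} (ha : 0 < a) (hb : 0 < b) (u v : ℂ) :
    ‖u + v‖^2 * (a + b)⁻¹ ≤ ‖u‖^2 * a⁻¹ + ‖v‖^2 * b⁻¹ := by
  have h1 : ‖u + v‖ ≤ ‖u‖ + ‖v‖ := norm_add_le u v
  have h2 : ‖u + v‖^2 ≤ (‖u‖ + ‖v‖)^2 := by
    have := norm_nonneg (u + v)
    nlinarith
  have h3 : (‖u‖ + ‖v‖)^2 * (a + b)⁻¹ ≤ ‖u‖^2 * a⁻¹ + ‖v‖^2 * b⁻¹ := by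
    rw [mul_inv_le_iff₀ (by linarith)]
    have key : (‖u‖^2 * a⁻¹ + ‖v‖^2 * b⁻¹) * (a + b) - (‖u‖ + ‖v‖)^2
        = (b * ‖u‖ - a * ‖v‖)^2 * (a⁻¹ * b⁻¹) := by
      field_simp
      ring
    nlinarith [sq_nonneg (b * ‖u‖ - a * ‖v‖), mul_pos (inv_pos.mpr ha) (inv_pos.mpr hb)]
  calc ‖u + v‖^2 * (a + b)⁻¹ ≤ (‖u‖ + ‖v‖)^2 * (a + b)⁻¹ := by
        apply mul_le_mul_of_nonneg_right h2 (by positivity)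
    _ ≤ _ := h3

lemma scalar_eq {a b : ℝ} (ha : 0 < a) (hb : 0 < b) (u : ℂ) :
    ‖u‖^2 * (a + b)⁻¹ = ‖u * ((a / (a + b) : ℝ) : ℂ)‖^2 * a⁻¹ +
      ‖u - u * ((a / (a + b) : ℝ) : ℂ)‖^2 * b⁻¹ := by
  have hab : (0:ℝ) < a + b := by linarith
  have hr : (1 : ℝ) - a / (a + b) = b / (a + b) := by field_simp; ring
  have h1 : u - u * ((a / (a + b) : ℝ) : ℂ) = u * ((b / (a + b) : ℝ) : ℂ) := by
    rw [← hr]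
    push_cast
    ring
  rw [h1, norm_mul, norm_mul, Complex.norm_real, Complex.norm_real, Real.norm_eq_abs,
    Real.norm_eq_abs, abs_of_pos (by positivity), abs_of_pos (by positivity)]
  field_simp

lemma decomp {f₁ f₂ : ℝ → ℝ}
    (hmono₁ : StrictMonoOn f₁ (Set.Ioi 0)) (hsmooth₁ : ContDiffOn ℝ 1 f₁ (Set.Ioi 0))
    (hmono₂ : StrictMonoOn f₂ (Set.Ioi 0)) (hsmooth₂ : ContDiffOn ℝ 1 f₂ (Set.Ioi 0))
    (hder₁ : ∀ t ∈ Set.Ioi (0:ℝ), 0 < deriv f₁ t)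
    (hder₂ : ∀ t ∈ Set.Ioi (0:ℝ), 0 < deriv f₂ t)
    (z : Matrix m m ℂ) (hz : z.PosDef) (h : Matrix m m ℂ) :
    ∃ h₁ h₂ : Matrix m m ℂ, h = h₁ + h₂ ∧
      (Matrix.trace (hᴴ * DmapInv (fun t => f₁ t + f₂ t) z h)).re =
        (Matrix.trace (h₁ᴴ * DmapInv f₁ z h₁)).re +
          (Matrix.trace (h₂ᴴ * DmapInv f₂ z h₂)).re := by
  have hzH : z.IsHermitian := hz.1
  set U : Matrix m m ℂ := (hzH.eigenvectorUnitary : Matrix m m ℂ) with hU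
  set lam : m → ℝ := hzH.eigenvalues with hlam
  have hlpos : ∀ i, 0 < lam i := fun i => hz.eigenvalues_pos i
  have hU1 : Uᴴ * U = 1 := by
    rw [hU, ← Matrix.star_eq_conjTranspose]
    exact (Matrix.mem_unitaryGroup_iff').mp hzH.eigenvectorUnitary.2
  set k : Matrix m m ℂ := Uᴴ * h * U with hk
  set k₁ : Matrix m m ℂ := Matrix.of (fun i j => k i j *
    (((dd f₁ (lam i) (lam j)) / (dd f₁ (lam i) (lam j) + dd f₂ (lam i) (lam j)) : ℝ) : ℂ))
    with hk₁
  have cancel : ∀ M : Matrix m m ℂ, Uᴴ * (U * M * Uᴴ) * U = M := by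
    intro M
    calc Uᴴ * (U * M * Uᴴ) * U = (Uᴴ * U) * M * (Uᴴ * U) := by simp only [Matrix.mul_assoc]
      _ = M := by rw [hU1, Matrix.one_mul, Matrix.mul_one]
  refine ⟨U * k₁ * Uᴴ, h - U * k₁ * Uᴴ, by abel, ?_⟩
  have e1 : Uᴴ * (U * k₁ * Uᴴ) * U = k₁ := cancel k₁
  have e2 : Uᴴ * (h - U * k₁ * Uᴴ) * U = k - k₁ := by
    rw [Matrix.mul_sub, Matrix.sub_mul, e1, ← hk]
  rw [trace_dminv _ z h hzH, trace_dminv f₁ z _ hzH, trace_dminv f₂ z _ hzH]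
  rw [← hU, ← hlam, ← hk, e1, e2]
  rw [← Finset.sum_add_distrib]
  refine Finset.sum_congr rfl fun i _ => ?_
  rw [← Finset.sum_add_distrib]
  refine Finset.sum_congr rfl fun j _ => ?_
  have hdd : dd (fun t => f₁ t + f₂ t) (lam j) (lam i) =
      dd f₁ (lam j) (lam i) + dd f₂ (lam j) (lam i) :=
    dd_add _ _ _ _ (diffAt hsmooth₁ (hlpos j)) (diffAt hsmooth₂ (hlpos j))
  rw [hdd, Matrix.sub_apply, hk₁]
  simp only [Matrix.of_apply]
  exact scalar_eq (dd_pos hmono₁ hder₁ (hlpos j) (hlpos i))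
    (dd_pos hmono₂ hder₂ (hlpos j) (hlpos i)) (k j i)

lemma superadd {f₁ f₂ : ℝ → ℝ}
    (hmono₁ : StrictMonoOn f₁ (Set.Ioi 0)) (hsmooth₁ : ContDiffOn ℝ 1 f₁ (Set.Ioi 0))
    (hmono₂ : StrictMonoOn f₂ (Set.Ioi 0)) (hsmooth₂ : ContDiffOn ℝ 1 f₂ (Set.Ioi 0))
    (hder₁ : ∀ t ∈ Set.Ioi (0:ℝ), 0 < deriv f₁ t)
    (hder₂ : ∀ t ∈ Set.Ioi (0:ℝ), 0 < deriv f₂ t)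
    (p : Matrix m m ℂ) (hp : p.PosDef) (h₁ h₂ : Matrix m m ℂ) :
    (Matrix.trace ((h₁ + h₂)ᴴ * DmapInv (fun t => f₁ t + f₂ t) p (h₁ + h₂))).re ≤
      (Matrix.trace (h₁ᴴ * DmapInv f₁ p h₁)).re +
        (Matrix.trace (h₂ᴴ * DmapInv f₂ p h₂)).re := by
  have hpH : p.IsHermitian := hp.1
  set V : Matrix m m ℂ := (hpH.eigenvectorUnitary : Matrix m m ℂ) with hV
  set lam : m → ℝ := hpH.eigenvalues with hlam
  have hlpos : ∀ i, 0 < lam i := fun i => hp.eigenvalues_pos i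
  rw [trace_dminv _ p _ hpH, trace_dminv f₁ p _ hpH, trace_dminv f₂ p _ hpH]
  rw [← hV, ← hlam]
  have hadd : Vᴴ * (h₁ + h₂) * V = Vᴴ * h₁ * V + Vᴴ * h₂ * V := by
    rw [Matrix.mul_add, Matrix.add_mul]
  rw [hadd]
  rw [← Finset.sum_add_distrib]
  refine Finset.sum_le_sum fun i _ => ?_
  rw [← Finset.sum_add_distrib]
  refine Finset.sum_le_sum fun j _ => ?_
  have hdd : dd (fun t => f₁ t + f₂ t) (lam j) (lam i) =
      dd f₁ (lam j) (lam i) + dd f₂ (lam j) (lam i) :=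
    dd_add _ _ _ _ (diffAt hsmooth₁ (hlpos j)) (diffAt hsmooth₂ (hlpos j))
  rw [hdd, Matrix.add_apply]
  exact scalar_ineq (dd_pos hmono₁ hder₁ (hlpos j) (hlpos i))
    (dd_pos hmono₂ hder₂ (hlpos j) (hlpos i)) _ _

lemma trace_smul_eq {f₁ : ℝ → ℝ} (hsmooth₁ : ContDiffOn ℝ 1 f₁ (Set.Ioi 0)) (c : ℝ)
    (x h : Matrix m m ℂ) (hx : x.PosDef) :
    (Matrix.trace (hᴴ * DmapInv (fun t => c * f₁ t) x h)).re =
      c⁻¹ * (Matrix.trace (hᴴ * DmapInv f₁ x h)).re := by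
  rw [trace_dminv _ x h hx.1, trace_dminv f₁ x h hx.1, Finset.mul_sum]
  refine Finset.sum_congr rfl fun i _ => ?_
  rw [Finset.mul_sum]
  refine Finset.sum_congr rfl fun j _ => ?_
  rw [dd_smul c f₁ _ _ (diffAt hsmooth₁ (hx.eigenvalues_pos j)), mul_inv]
  ring


end Aux

/-- If the inverse Fréchet differentials of `f₁` and `f₂` give concave trace maps, so does the
one of `f₁ + f₂` (and of `c • f₁` for `c > 0`); consequently the class `Φ_n` of representing
functions of matrix entropies of order `n` is a convex cone. -/
theorem stmt_3 (n : ℕ) (f₁ f₂ : ℝ → ℝ)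
    (hmono₁ : StrictMonoOn f₁ (Set.Ioi (0 : ℝ)))
    (hsmooth₁ : ContDiffOn ℝ 1 f₁ (Set.Ioi (0 : ℝ)))
    (hmono₂ : StrictMonoOn f₂ (Set.Ioi (0 : ℝ)))
    (hsmooth₂ : ContDiffOn ℝ 1 f₂ (Set.Ioi (0 : ℝ)))
    (hconc₁ : ∀ h : Matrix (Fin n) (Fin n) ℂ,
      ConcaveOn ℝ {x : Matrix (Fin n) (Fin n) ℂ | x.PosDef}
        (fun x => (Matrix.trace (hᴴ * DmapInv f₁ x h)).re))
    (hconc₂ : ∀ h : Matrix (Fin n) (Fin n) ℂ,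
      ConcaveOn ℝ {x : Matrix (Fin n) (Fin n) ℂ | x.PosDef}
        (fun x => (Matrix.trace (hᴴ * DmapInv f₂ x h)).re)) :
    (∀ h : Matrix (Fin n) (Fin n) ℂ,
      ConcaveOn ℝ {x : Matrix (Fin n) (Fin n) ℂ | x.PosDef}
        (fun x => (Matrix.trace (hᴴ * DmapInv (fun t => f₁ t + f₂ t) x h)).re)) ∧
    (∀ c : ℝ, 0 < c → ∀ h : Matrix (Fin n) (Fin n) ℂ,
      ConcaveOn ℝ {x : Matrix (Fin n) (Fin n) ℂ | x.PosDef}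
        (fun x => (Matrix.trace (hᴴ * DmapInv (fun t => c * f₁ t) x h)).re)) := by
  have hconvex : Convex ℝ {x : Matrix (Fin n) (Fin n) ℂ | x.PosDef} :=
    fun x hx y hy a b ha hb hab => posDef_combo hx hy ha hb hab
  constructor
  · intro h
    by_cases hn : n = 0
    · subst hn
      have hz : ∀ M : Matrix (Fin 0) (Fin 0) ℂ, Matrix.trace M = 0 := fun M => by
        simp [Matrix.trace]
      refine ⟨hconvex, fun x hx y hy a b ha hb hab => ?_⟩
      simp [hz]
    · haveI : Nonempty (Fin n) := Fin.pos_iff_nonempty.mp (Nat.pos_of_ne_zero hn)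
      have hder₁ : ∀ t ∈ Set.Ioi (0:ℝ), 0 < deriv f₁ t := fun t ht =>
        deriv_pos_of_concave hmono₁ hsmooth₁ (hconc₁ 1) ht
      have hder₂ : ∀ t ∈ Set.Ioi (0:ℝ), 0 < deriv f₂ t := fun t ht =>
        deriv_pos_of_concave hmono₂ hsmooth₂ (hconc₂ 1) ht
      refine ⟨hconvex, fun x hx y hy a b ha hb hab => ?_⟩
      simp only [Set.mem_setOf_eq] at hx hy
      have hzPD : (a • x + b • y).PosDef := posDef_combo hx hy ha hb hab
      obtain ⟨h₁, h₂, hsplit, heq⟩ :=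
        decomp hmono₁ hsmooth₁ hmono₂ hsmooth₂ hder₁ hder₂ _ hzPD h
      have c1 := (hconc₁ h₁).2 hx hy ha hb hab
      have c2 := (hconc₂ h₂).2 hx hy ha hb hab
      have s3x := superadd hmono₁ hsmooth₁ hmono₂ hsmooth₂ hder₁ hder₂ x hx h₁ h₂
      have s3y := superadd hmono₁ hsmooth₁ hmono₂ hsmooth₂ hder₁ hder₂ y hy h₁ h₂
      rw [← hsplit] at s3x s3y
      simp only [smul_eq_mul] at c1 c2 ⊢
      rw [heq]
      have m1 := mul_le_mul_of_nonneg_left s3x ha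
      have m2 := mul_le_mul_of_nonneg_left s3y hb
      rw [mul_add] at m1 m2
      linarith
  · intro c hc h
    refine ⟨hconvex, fun x hx y hy a b ha hb hab => ?_⟩
    simp only [Set.mem_setOf_eq] at hx hy
    have hzPD : (a • x + b • y).PosDef := posDef_combo hx hy ha hb hab
    have hcc := (hconc₁ h).2 hx hy ha hb hab
    simp only [smul_eq_mul] at hcc ⊢
    rw [trace_smul_eq hsmooth₁ c x h hx, trace_smul_eq hsmooth₁ c y h hy,
      trace_smul_eq hsmooth₁ c _ h hzPD]
    calc a * (c⁻¹ * (Matrix.trace (hᴴ * DmapInv f₁ x h)).re) +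
          b * (c⁻¹ * (Matrix.trace (hᴴ * DmapInv f₁ y h)).re)
        = c⁻¹ * (a * (Matrix.trace (hᴴ * DmapInv f₁ x h)).re +
            b * (Matrix.trace (hᴴ * DmapInv f₁ y h)).re) := by ring
      _ ≤ c⁻¹ * (Matrix.trace (hᴴ * DmapInv f₁ (a • x + b • y) h)).re :=
          mul_le_mul_of_nonneg_left hcc (inv_nonneg.mpr hc.le)
end

section
/- Let f:(0,∞)→ℝ be continuously differentiable and strictly increasing, and set g(t,s) = (s−t)/(f(s)−f(t)) for t≠s and g(t,t) = 1/f'(t). Suppose that for every natural number m and every m×m complex matrix H, the map x ↦ Tr(H* D_f(x)⁻¹ H) is concave on Hermitian positive definite m×m matrices. Then for every natural number n and every n×n complex matrix h, the map (x,y) ↦ Σ_{i,j} |⟨h e_i, d_j⟩|² g(λ_i, μ_j) is jointly concave on pairs of Hermitian positive definite n×n matrices, where (e_i), (λ_i) and (d_j), (μ_j) are orthonormal eigenbases and eigenvalues of x and y respectively (this quantity equals Tr(h* g(L_x, R_y) h), with L_x and R_y left and right multiplication by x and y). -/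
open Matrix
open scoped ComplexOrder

lemma dd_inv_eq_gfun (f : ℝ → ℝ) (t s : ℝ) : (dd f t s)⁻¹ = gfun f t s := by
  unfold dd gfun
  by_cases h : t = s
  · simp [h]
  · rw [if_neg h, if_neg h, inv_div]
    rw [show (t - s) = -(s - t) by ring, show (f t - f s) = -(f s - f t) by ring, neg_div_neg_eq]

lemma gfun_symm (f : ℝ → ℝ) (t s : ℝ) : gfun f t s = gfun f s t := by
  unfold gfun
  by_cases h : t = s
  · simp [h]
  · rw [if_neg h, if_neg (Ne.symm h)]
    rw [show (s - t) = -(t - s) by ring, show (f s - f t) = -(f t - f s) by ring, neg_div_neg_eq]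

lemma trace_form {m : Type*} [Fintype m] [DecidableEq m] (G : m → m → ℝ) (A : Matrix m m ℂ) :
    (Matrix.trace (Aᴴ * ((Matrix.of fun i j => ((G i j : ℝ) : ℂ)).hadamard A))).re
      = ∑ i, ∑ j, ‖A i j‖ ^ 2 * G i j := by
  have key : ∀ (z : ℂ) (r : ℝ), (star z * ((r : ℝ) * z : ℂ)).re = ‖z‖ ^ 2 * r := by
    intro z r
    simp [Complex.star_def, Complex.mul_re, Complex.mul_im, Complex.sq_norm,
      Complex.normSq_apply]
    ring
  rw [Matrix.trace]
  simp only [Matrix.diag_apply, Matrix.mul_apply, Matrix.conjTranspose_apply,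
    Matrix.hadamard_apply, Matrix.of_apply]
  rw [Complex.re_sum]
  rw [Finset.sum_comm]
  refine Finset.sum_congr rfl fun i _ => ?_
  rw [Complex.re_sum]
  exact Finset.sum_congr rfl fun j _ => key _ _

lemma hadamard_conj {m : Type*} [Fintype m] [DecidableEq m] (g : ℝ → ℝ → ℝ)
    (W B : Matrix m m ℂ) (κ ev : m → ℝ)
    (hW : ∀ i j, W i j ≠ 0 → κ j = ev i) :
    (Matrix.of fun i j => ((g (κ i) (κ j) : ℝ) : ℂ)).hadamard (Wᴴ * B * W)
      = Wᴴ * ((Matrix.of fun i j => ((g (ev i) (ev j) : ℝ) : ℂ)).hadamard B) * W := by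
  ext i j
  simp only [Matrix.hadamard_apply, Matrix.of_apply, Matrix.mul_apply,
    Matrix.conjTranspose_apply]
  rw [Finset.mul_sum]
  refine Finset.sum_congr rfl fun l _ => ?_
  rw [Finset.sum_mul, Finset.sum_mul, Finset.mul_sum]
  refine Finset.sum_congr rfl fun k _ => ?_
  by_cases hki : W k i = 0
  · simp [hki]
  by_cases hlj : W l j = 0
  · simp [hlj]
  have h1 : κ i = ev k := hW k i hki
  have h2 : κ j = ev l := hW l j hlj
  rw [h1, h2]
  ring


lemma mul_cancel_left {m : Type*} [Fintype m] [DecidableEq m]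
    {A B : Matrix m m ℂ} (h : A * B = 1) (Z : Matrix m m ℂ) : A * (B * Z) = Z := by
  rw [← mul_assoc, h, one_mul]

lemma quantity {m : Type*} [Fintype m] [DecidableEq m] (f : ℝ → ℝ)
    (U H X : Matrix m m ℂ) (κ : m → ℝ)
    (hU1 : Uᴴ * U = 1) (hU2 : U * Uᴴ = 1)
    (hX : X = U * Matrix.diagonal (fun i => ((κ i : ℝ) : ℂ)) * Uᴴ) :
    (Matrix.trace (Hᴴ * DmapInv f X H)).re
      = ∑ i, ∑ j, ‖(Uᴴ * H * U) i j‖ ^ 2 * gfun f (κ i) (κ j) := by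
  have hDκ : (Matrix.diagonal (fun i => ((κ i : ℝ) : ℂ)))ᴴ
      = Matrix.diagonal (fun i => ((κ i : ℝ) : ℂ)) := by
    ext i j
    by_cases hij : i = j <;>
      simp [Matrix.conjTranspose_apply, Matrix.diagonal_apply, hij, Complex.conj_ofReal,
        Ne.symm, eq_comm]
  have hXH : X.IsHermitian := by
    rw [hX]
    unfold Matrix.IsHermitian
    rw [Matrix.conjTranspose_mul, Matrix.conjTranspose_mul,
      Matrix.conjTranspose_conjTranspose, hDκ, mul_assoc]
  rw [DmapInv, dif_pos hXH]
  set V := (hXH.eigenvectorUnitary : Matrix m m ℂ) with hVdef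
  set ev := hXH.eigenvalues with hevdef
  have hV1 : Vᴴ * V = 1 := by
    have := hXH.eigenvectorUnitary.2
    rw [Matrix.mem_unitaryGroup_iff'] at this
    simpa [Matrix.star_eq_conjTranspose] using this
  have hV2 : V * Vᴴ = 1 := by
    have := hXH.eigenvectorUnitary.2
    rw [Matrix.mem_unitaryGroup_iff] at this
    simpa [Matrix.star_eq_conjTranspose] using this
  have hspec : X = V * Matrix.diagonal (fun i => ((ev i : ℝ) : ℂ)) * Vᴴ := by
    have := hXH.spectral_theorem
    exact this
  have hWW : (Vᴴ * U) * (Vᴴ * U)ᴴ = 1 := by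
    rw [Matrix.conjTranspose_mul, Matrix.conjTranspose_conjTranspose,
      mul_assoc, ← mul_assoc U, hU2, one_mul, hV1]
  have e1 : (Vᴴ * U) * Matrix.diagonal (fun i => ((κ i : ℝ) : ℂ)) = Vᴴ * (X * U) := by
    rw [hX]
    simp only [mul_assoc, hU1, mul_one]
  have e2 : Matrix.diagonal (fun i => ((ev i : ℝ) : ℂ)) * (Vᴴ * U) = Vᴴ * (X * U) := by
    rw [hspec]
    simp only [mul_assoc]
    rw [mul_cancel_left hV1]
  have h3 := e1.trans e2.symm
  have hWkey : ∀ i j, (Vᴴ * U) i j ≠ 0 → κ j = ev i := by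
    intro i j hne
    have h4 := congrFun (congrFun h3 i) j
    rw [Matrix.mul_diagonal, Matrix.diagonal_mul] at h4
    have h5 : (Vᴴ * U) i j * ((κ j : ℝ) : ℂ) = (Vᴴ * U) i j * ((ev i : ℝ) : ℂ) := by
      rw [h4]; ring
    have := mul_left_cancel₀ hne h5
    exact_mod_cast this
  have hA : Uᴴ * H * U = (Vᴴ * U)ᴴ * (Vᴴ * H * V) * (Vᴴ * U) := by
    simp only [Matrix.conjTranspose_mul, Matrix.conjTranspose_conjTranspose]
    simp only [mul_assoc]
    rw [mul_cancel_left hV2, mul_cancel_left hV2]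
  -- left side: trace formula in the eigenbasis V
  have cyc : Matrix.trace (Hᴴ * (V *
      ((Matrix.of fun i j => (((dd f (ev i) (ev j))⁻¹ : ℝ) : ℂ)).hadamard (Vᴴ * H * V)) * Vᴴ))
      = Matrix.trace ((Vᴴ * H * V)ᴴ *
        ((Matrix.of fun i j => ((gfun f (ev i) (ev j) : ℝ) : ℂ)).hadamard (Vᴴ * H * V))) := by
    simp only [dd_inv_eq_gfun]
    rw [show Hᴴ * (V * ((Matrix.of fun i j => ((gfun f (ev i) (ev j) : ℝ) : ℂ)).hadamard (Vᴴ * H * V)) * Vᴴ)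
        = Hᴴ * V * ((Matrix.of fun i j => ((gfun f (ev i) (ev j) : ℝ) : ℂ)).hadamard (Vᴴ * H * V)) * Vᴴ by
      simp only [mul_assoc]]
    rw [Matrix.trace_mul_cycle]
    simp only [Matrix.conjTranspose_mul, Matrix.conjTranspose_conjTranspose, mul_assoc]
  rw [cyc, trace_form (fun i j => gfun f (ev i) (ev j)) (Vᴴ * H * V)]
  rw [← trace_form (fun i j => gfun f (κ i) (κ j)) (Uᴴ * H * U), hA]
  rw [hadamard_conj (gfun f) (Vᴴ * U) (Vᴴ * H * V) κ ev hWkey]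
  rw [show ((Vᴴ * U)ᴴ * (Vᴴ * H * V) * (Vᴴ * U))ᴴ
      = (Vᴴ * U)ᴴ * (Vᴴ * H * V)ᴴ * (Vᴴ * U) by
    simp only [Matrix.conjTranspose_mul, Matrix.conjTranspose_conjTranspose, mul_assoc]]
  rw [show (Vᴴ * U)ᴴ * (Vᴴ * H * V)ᴴ * (Vᴴ * U) * ((Vᴴ * U)ᴴ *
      ((Matrix.of fun i j => ((gfun f (ev i) (ev j) : ℝ) : ℂ)).hadamard (Vᴴ * H * V)) * (Vᴴ * U))
      = (Vᴴ * U)ᴴ * ((Vᴴ * H * V)ᴴ * (((Vᴴ * U) * (Vᴴ * U)ᴴ) *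
      (((Matrix.of fun i j => ((gfun f (ev i) (ev j) : ℝ) : ℂ)).hadamard (Vᴴ * H * V)) * (Vᴴ * U)))) by
    simp only [mul_assoc]]
  rw [hWW, one_mul, Matrix.trace_mul_comm]
  rw [show (Vᴴ * H * V)ᴴ * (((Matrix.of fun i j => ((gfun f (ev i) (ev j) : ℝ) : ℂ)).hadamard (Vᴴ * H * V)) * (Vᴴ * U)) * (Vᴴ * U)ᴴ
      = (Vᴴ * H * V)ᴴ * (((Matrix.of fun i j => ((gfun f (ev i) (ev j) : ℝ) : ℂ)).hadamard (Vᴴ * H * V)) * ((Vᴴ * U) * (Vᴴ * U)ᴴ)) by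
    simp only [mul_assoc]]
  rw [hWW, mul_one]
  exact (trace_form (fun i j => gfun f (ev i) (ev j)) (Vᴴ * H * V)).symm

lemma posSemidef_smul_real {m : Type*} [Fintype m] {A : Matrix m m ℂ}
    (hA : A.PosSemidef) {c : ℝ} (hc : 0 ≤ c) : (c • A).PosSemidef := by
  rw [Matrix.posSemidef_iff_dotProduct_mulVec]
  constructor
  · unfold Matrix.IsHermitian
    rw [Matrix.conjTranspose_smul, star_trivial, hA.1]
  · intro v
    have h1 : (c • A) *ᵥ v = c • (A *ᵥ v) := by
      ext i; simp [Matrix.mulVec, dotProduct, Finset.smul_sum, Matrix.smul_apply, smul_mul_assoc, mul_assoc]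
    rw [h1, dotProduct_smul]
    have := hA.dotProduct_mulVec_nonneg v
    have hcx : ((c : ℝ) : ℂ) * (star v ⬝ᵥ A *ᵥ v) ≥ 0 :=
      mul_nonneg (by exact_mod_cast hc) this
    simpa [Complex.real_smul] using hcx

lemma posDef_smul_real {m : Type*} [Fintype m] {A : Matrix m m ℂ}
    (hA : A.PosDef) {c : ℝ} (hc : 0 < c) : (c • A).PosDef := by
  rw [Matrix.posDef_iff_dotProduct_mulVec]
  constructor
  · unfold Matrix.IsHermitian
    rw [Matrix.conjTranspose_smul, star_trivial, hA.1]
  · intro v hv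
    have h1 : (c • A) *ᵥ v = c • (A *ᵥ v) := by
      ext i; simp [Matrix.mulVec, dotProduct, Finset.smul_sum, Matrix.smul_apply, smul_mul_assoc, mul_assoc]
    rw [h1, dotProduct_smul]
    have := hA.dotProduct_mulVec_pos hv
    have hcx : 0 < ((c : ℝ) : ℂ) * (star v ⬝ᵥ A *ᵥ v) :=
      mul_pos (by exact_mod_cast hc) this
    simpa [Complex.real_smul] using hcx

lemma posDef_convex {m : Type*} [Fintype m] {A B : Matrix m m ℂ}
    (hA : A.PosDef) (hB : B.PosDef) {a b : ℝ} (ha : 0 ≤ a) (hb : 0 ≤ b)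
    (hab : a + b = 1) : (a • A + b • B).PosDef := by
  rcases eq_or_lt_of_le ha with h | h
  · have hb1 : b = 1 := by linarith
    simpa [← h, hb1] using hB
  · exact (posDef_smul_real hA h).add_posSemidef (posSemidef_smul_real hB.posSemidef hb)

lemma posDef_fromBlocks {l o : Type*} [Fintype l] [Fintype o] [DecidableEq l] [DecidableEq o]
    {x : Matrix l l ℂ} {y : Matrix o o ℂ} (hx : x.PosDef) (hy : y.PosDef) :
    (Matrix.fromBlocks x 0 0 y).PosDef := by
  rw [Matrix.posDef_iff_dotProduct_mulVec]
  constructor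
  · unfold Matrix.IsHermitian
    rw [Matrix.fromBlocks_conjTranspose]
    simp [hx.1.eq, hy.1.eq]
  · intro v hv
    have hstar : ∀ (a : l → ℂ) (b : o → ℂ), star (Sum.elim a b) = Sum.elim (star a) (star b) := by
      intro a b; funext i; cases i <;> rfl
    rw [← Sum.elim_comp_inl_inr v, Matrix.fromBlocks_mulVec, hstar,
      sumElim_dotProduct_sumElim]
    simp only [Matrix.zero_mulVec, add_zero, zero_add]
    have hv' : (v ∘ Sum.inl) ≠ 0 ∨ (v ∘ Sum.inr) ≠ 0 := by
      by_contra hcon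
      push_neg at hcon
      apply hv
      funext i
      cases i with
      | inl i => exact congrFun hcon.1 i
      | inr i => exact congrFun hcon.2 i
    have h1 := hx.posSemidef.dotProduct_mulVec_nonneg (v ∘ Sum.inl)
    have h2 := hy.posSemidef.dotProduct_mulVec_nonneg (v ∘ Sum.inr)
    rcases hv' with h | h
    · have := hx.dotProduct_mulVec_pos h
      calc (0 : ℂ) < star (v ∘ Sum.inl) ⬝ᵥ x *ᵥ (v ∘ Sum.inl) := this
        _ ≤ _ := le_add_of_nonneg_right h2
    · have := hy.dotProduct_mulVec_pos h
      calc (0 : ℂ) < star (v ∘ Sum.inr) ⬝ᵥ y *ᵥ (v ∘ Sum.inr) := this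
        _ ≤ _ := le_add_of_nonneg_left h1

lemma posDef_submatrix_equiv {l o : Type*} [Fintype l] [Fintype o] [DecidableEq l]
    [DecidableEq o] (e : l ≃ o) {M : Matrix o o ℂ} (hM : M.PosDef) :
    (M.submatrix e e).PosDef := by
  rw [Matrix.posDef_iff_dotProduct_mulVec]
  constructor
  · unfold Matrix.IsHermitian
    rw [Matrix.conjTranspose_submatrix, hM.1.eq]
  · intro v hv
    have key : star v ⬝ᵥ (M.submatrix e e *ᵥ v)
        = star (v ∘ e.symm) ⬝ᵥ (M *ᵥ (v ∘ e.symm)) := by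
      simp only [dotProduct, Matrix.mulVec, Matrix.submatrix_apply,
        Pi.star_apply, Function.comp_apply]
      refine Fintype.sum_equiv e _ _ fun i => ?_
      rw [Equiv.symm_apply_apply]
      congr 1
      refine Fintype.sum_equiv e _ _ fun j => ?_
      rw [Equiv.symm_apply_apply]
    rw [key]
    apply hM.dotProduct_mulVec_pos
    intro hcon
    apply hv
    funext i
    have := congrFun hcon (e i)
    simpa using this


lemma Qg_eq (f : ℝ → ℝ) {n : ℕ} (h x y : Matrix (Fin n) (Fin n) ℂ)
    (hx : x.IsHermitian) (hy : y.IsHermitian) :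
    Qg f h x y =
      (Matrix.trace
        (((Matrix.fromBlocks 0 0 h 0).submatrix finSumFinEquiv.symm finSumFinEquiv.symm)ᴴ *
          DmapInv f
            ((Matrix.fromBlocks x 0 0 y).submatrix finSumFinEquiv.symm finSumFinEquiv.symm)
            ((Matrix.fromBlocks 0 0 h 0).submatrix finSumFinEquiv.symm finSumFinEquiv.symm))).re
    := by
  set e : Fin n ⊕ Fin n ≃ Fin (n + n) := finSumFinEquiv with he
  set Vx := (hx.eigenvectorUnitary : Matrix (Fin n) (Fin n) ℂ) with hVx
  set Vy := (hy.eigenvectorUnitary : Matrix (Fin n) (Fin n) ℂ) with hVy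
  have hVx1 : Vxᴴ * Vx = 1 := by
    have := hx.eigenvectorUnitary.2
    rw [Matrix.mem_unitaryGroup_iff'] at this
    simpa [Matrix.star_eq_conjTranspose] using this
  have hVx2 : Vx * Vxᴴ = 1 := by
    have := hx.eigenvectorUnitary.2
    rw [Matrix.mem_unitaryGroup_iff] at this
    simpa [Matrix.star_eq_conjTranspose] using this
  have hVy1 : Vyᴴ * Vy = 1 := by
    have := hy.eigenvectorUnitary.2
    rw [Matrix.mem_unitaryGroup_iff'] at this
    simpa [Matrix.star_eq_conjTranspose] using this
  have hVy2 : Vy * Vyᴴ = 1 := by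
    have := hy.eigenvectorUnitary.2
    rw [Matrix.mem_unitaryGroup_iff] at this
    simpa [Matrix.star_eq_conjTranspose] using this
  set U := (Matrix.fromBlocks Vx 0 0 Vy).submatrix e.symm e.symm with hU
  set κ : Fin (n + n) → ℝ := fun i => Sum.elim hx.eigenvalues hy.eigenvalues (e.symm i) with hκ
  have hU1 : Uᴴ * U = 1 := by
    rw [hU, Matrix.conjTranspose_submatrix, Matrix.submatrix_mul_equiv,
      Matrix.fromBlocks_conjTranspose, Matrix.fromBlocks_multiply]
    simp only [Matrix.mul_zero, Matrix.zero_mul, add_zero, zero_add,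
      Matrix.conjTranspose_zero, hVx1, hVy1]
    rw [Matrix.fromBlocks_one, Matrix.submatrix_one_equiv]
  have hU2 : U * Uᴴ = 1 := by
    rw [hU, Matrix.conjTranspose_submatrix, Matrix.submatrix_mul_equiv,
      Matrix.fromBlocks_conjTranspose, Matrix.fromBlocks_multiply]
    simp only [Matrix.mul_zero, Matrix.zero_mul, add_zero, zero_add,
      Matrix.conjTranspose_zero, hVx2, hVy2]
    rw [Matrix.fromBlocks_one, Matrix.submatrix_one_equiv]
  have hdiag : Matrix.diagonal (fun i => ((κ i : ℝ) : ℂ))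
      = (Matrix.fromBlocks
          (Matrix.diagonal (fun i => ((hx.eigenvalues i : ℝ) : ℂ))) 0 0
          (Matrix.diagonal (fun i => ((hy.eigenvalues i : ℝ) : ℂ)))).submatrix e.symm e.symm := by
    rw [Matrix.fromBlocks_diagonal]
    ext i j
    by_cases hij : i = j
    · subst hij
      simp only [Matrix.diagonal_apply_eq, Matrix.submatrix_apply, Matrix.diagonal_apply_eq,
        hκ]
      cases hsv : e.symm i <;> simp [hsv]
    · have : e.symm i ≠ e.symm j := fun hcon => hij (e.symm.injective hcon)
      simp [Matrix.diagonal_apply_ne _ hij, Matrix.diagonal_apply_ne _ this]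
  have hspecx : x = Vx * Matrix.diagonal (fun i => ((hx.eigenvalues i : ℝ) : ℂ)) * Vxᴴ := by
    have := hx.spectral_theorem
    exact this
  have hspecy : y = Vy * Matrix.diagonal (fun i => ((hy.eigenvalues i : ℝ) : ℂ)) * Vyᴴ := by
    have := hy.spectral_theorem
    exact this
  have hX : (Matrix.fromBlocks x 0 0 y).submatrix e.symm e.symm
      = U * Matrix.diagonal (fun i => ((κ i : ℝ) : ℂ)) * Uᴴ := by
    rw [hdiag, hU, Matrix.conjTranspose_submatrix, Matrix.submatrix_mul_equiv,
      Matrix.submatrix_mul_equiv, Matrix.fromBlocks_conjTranspose,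
      Matrix.fromBlocks_multiply, Matrix.fromBlocks_multiply]
    simp only [Matrix.mul_zero, Matrix.zero_mul, add_zero, zero_add,
      Matrix.conjTranspose_zero]
    rw [← hspecx, ← hspecy]
  rw [quantity f U _ _ κ hU1 hU2 hX]
  have hUHU : Uᴴ * (Matrix.fromBlocks 0 0 h 0).submatrix e.symm e.symm * U
      = (Matrix.fromBlocks 0 0 (Vyᴴ * h * Vx) 0).submatrix e.symm e.symm := by
    rw [hU, Matrix.conjTranspose_submatrix, Matrix.submatrix_mul_equiv,
      Matrix.submatrix_mul_equiv, Matrix.fromBlocks_conjTranspose,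
      Matrix.fromBlocks_multiply, Matrix.fromBlocks_multiply]
    simp only [Matrix.mul_zero, Matrix.zero_mul, add_zero, zero_add,
      Matrix.conjTranspose_zero]
  rw [hUHU]
  have hsum : ∀ (F : Fin (n + n) → Fin (n + n) → ℝ),
      (∑ i, ∑ j, F i j) = ∑ s, ∑ t, F (e s) (e t) := by
    intro F
    rw [← Equiv.sum_comp e (fun i => ∑ j, F i j)]
    exact Finset.sum_congr rfl fun s _ => (Equiv.sum_comp e (F (e s))).symm
  rw [hsum]
  simp only [Matrix.submatrix_apply, Equiv.symm_apply_apply, hκ]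
  rw [Fintype.sum_sum_type]
  simp only [Fintype.sum_sum_type, Sum.elim_inl, Sum.elim_inr,
    Matrix.fromBlocks_apply₁₁, Matrix.fromBlocks_apply₁₂, Matrix.fromBlocks_apply₂₁,
    Matrix.fromBlocks_apply₂₂, Matrix.zero_apply, norm_zero, zero_pow, zero_mul,
    Finset.sum_const_zero, add_zero, zero_add]
  simp only [zero_pow, ne_eq, OfNat.ofNat_ne_zero, not_false_eq_true, zero_mul,
    Finset.sum_const_zero, add_zero, zero_add]
  rw [Qg, dif_pos hx, dif_pos hy]
  exact Finset.sum_comm.trans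
    (Finset.sum_congr rfl fun j _ => Finset.sum_congr rfl fun i _ => by rw [gfun_symm])


/-- If `x ↦ Tr H* D_f(x)⁻¹ H` is concave on positive definite matrices of every size, then for
every `h` the map `(x,y) ↦ Σ_{i,j} |⟨h e_i, d_j⟩|² g(λ_i, μ_j) = Tr h* g(L_x,R_y) h` is jointly
concave on pairs of positive definite matrices. -/
theorem stmt_10 (f : ℝ → ℝ)
    (hsmooth : ContDiffOn ℝ 1 f (Set.Ioi (0 : ℝ)))
    (hmono : StrictMonoOn f (Set.Ioi (0 : ℝ)))
    (hconc : ∀ (m : ℕ) (H : Matrix (Fin m) (Fin m) ℂ),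
      ConcaveOn ℝ {x : Matrix (Fin m) (Fin m) ℂ | x.PosDef}
        (fun x => (Matrix.trace (Hᴴ * DmapInv f x H)).re)) :
    ∀ (n : ℕ) (h : Matrix (Fin n) (Fin n) ℂ),
      ConcaveOn ℝ
        {p : Matrix (Fin n) (Fin n) ℂ × Matrix (Fin n) (Fin n) ℂ | p.1.PosDef ∧ p.2.PosDef}
        (fun p => Qg f h p.1 p.2) := by
  intro n h
  have hTlin : ∀ (a b : ℝ) (p q : Matrix (Fin n) (Fin n) ℂ × Matrix (Fin n) (Fin n) ℂ),
      (Matrix.fromBlocks (a • p + b • q).1 0 0 (a • p + b • q).2).submatrix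
          finSumFinEquiv.symm finSumFinEquiv.symm
        = a • (Matrix.fromBlocks p.1 0 0 p.2).submatrix finSumFinEquiv.symm finSumFinEquiv.symm
          + b • (Matrix.fromBlocks q.1 0 0 q.2).submatrix finSumFinEquiv.symm
              finSumFinEquiv.symm := by
    intro a b p q
    ext i j
    cases hsi : finSumFinEquiv.symm i <;> cases hsj : finSumFinEquiv.symm j <;>
      simp [Matrix.fromBlocks, hsi, hsj, Matrix.smul_apply, Matrix.submatrix_apply]
  constructor
  · intro p hp q hq a b ha hb hab
    exact ⟨posDef_convex hp.1 hq.1 ha hb hab, posDef_convex hp.2 hq.2 ha hb hab⟩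
  · intro p hp q hq a b ha hb hab
    have hcomb1 : ((a • p + b • q).1).PosDef := posDef_convex hp.1 hq.1 ha hb hab
    have hcomb2 : ((a • p + b • q).2).PosDef := posDef_convex hp.2 hq.2 ha hb hab
    have e1 := Qg_eq f h p.1 p.2 hp.1.isHermitian hp.2.isHermitian
    have e2 := Qg_eq f h q.1 q.2 hq.1.isHermitian hq.2.isHermitian
    have e3 := Qg_eq f h (a • p + b • q).1 (a • p + b • q).2
      hcomb1.isHermitian hcomb2.isHermitian
    simp only [e1, e2, e3]
    have hkey := (hconc (n + n)
      ((Matrix.fromBlocks 0 0 h 0).submatrix finSumFinEquiv.symm finSumFinEquiv.symm)).2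
      (x := (Matrix.fromBlocks p.1 0 0 p.2).submatrix finSumFinEquiv.symm finSumFinEquiv.symm)
      (y := (Matrix.fromBlocks q.1 0 0 q.2).submatrix finSumFinEquiv.symm finSumFinEquiv.symm)
      (posDef_submatrix_equiv _ (posDef_fromBlocks hp.1 hp.2))
      (posDef_submatrix_equiv _ (posDef_fromBlocks hq.1 hq.2))
      ha hb hab
    rw [← hTlin a b p q] at hkey
    exact hkey
end

section
/- Let n be a natural number, let f:(0,∞)→ℝ be continuously differentiable, let x be a Hermitian positive definite n×n complex matrix with orthonormal eigenbasis (e_i) and eigenvalues (λ_i), and let h be an n×n complex matrix. Then Tr(h* D_f(x) h) = Σ_{i,j} |⟨h e_i, e_j⟩|² ∫₀¹ f'(s λ_j + (1−s) λ_i) ds; in particular the divided difference satisfies Hermite's formula [t,s]_f = ∫₀¹ f'(λ t + (1−λ) s) dλ for all t,s > 0. -/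
open Matrix
open scoped ComplexOrder

lemma hermite (f : ℝ → ℝ) (hsmooth : ContDiffOn ℝ 1 f (Set.Ioi (0 : ℝ)))
    (t s : ℝ) (ht : 0 < t) (hs : 0 < s) :
    dd f t s = ∫ c in (0:ℝ)..1, deriv f (c * t + (1 - c) * s) := by
  have hderivcont : ContinuousOn (deriv f) (Set.Ioi (0:ℝ)) :=
    hsmooth.continuousOn_deriv_of_isOpen isOpen_Ioi le_rfl
  have hp : ∀ c ∈ Set.Icc (0:ℝ) 1, 0 < c * t + (1 - c) * s := by
    intro c hc
    have hm : 0 < min t s := lt_min ht hs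
    nlinarith [mul_nonneg hc.1 (sub_nonneg.2 (min_le_left t s)),
      mul_nonneg (sub_nonneg.2 hc.2) (sub_nonneg.2 (min_le_right t s))]
  have hlcont : Continuous (fun c : ℝ => c * t + (1 - c) * s) := by continuity
  have hcont : ContinuousOn (fun c : ℝ => deriv f (c * t + (1 - c) * s)) (Set.Icc 0 1) :=
    hderivcont.comp hlcont.continuousOn (fun c hc => hp c hc)
  rcases eq_or_ne t s with hts | hts
  · subst hts
    simp only [dd, if_pos rfl]
    have : ∀ c : ℝ, c * t + (1 - c) * t = t := fun c => by ring
    simp [this]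
  · have hD : ∀ c ∈ Set.uIcc (0:ℝ) 1,
        HasDerivAt (fun c : ℝ => f (c * t + (1 - c) * s))
          ((t - s) * deriv f (c * t + (1 - c) * s)) c := by
      intro c hc
      rw [Set.uIcc_of_le zero_le_one] at hc
      have hl : HasDerivAt (fun c : ℝ => c * t + (1 - c) * s) (t - s) c := by
        have h1 := ((hasDerivAt_id c).mul_const (t - s)).add_const s
        have : (fun c : ℝ => c * t + (1 - c) * s) = fun c : ℝ => c * (t - s) + s := by
          funext c; ring
        rw [this]; simpa using h1
      have hfd : DifferentiableAt ℝ f (c * t + (1 - c) * s) :=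
        (hsmooth.differentiableOn one_ne_zero).differentiableAt
          (isOpen_Ioi.mem_nhds (hp c hc))
      have := hfd.hasDerivAt.comp c hl
      simpa [mul_comm, Function.comp_def] using this
    have hint : IntervalIntegrable
        (fun c : ℝ => (t - s) * deriv f (c * t + (1 - c) * s)) MeasureTheory.volume 0 1 :=
      ((continuousOn_const.mul hcont).intervalIntegrable_of_Icc zero_le_one)
    have hFTC := intervalIntegral.integral_eq_sub_of_hasDerivAt hD hint
    rw [intervalIntegral.integral_const_mul] at hFTC
    norm_num at hFTC
    rw [dd, if_neg hts]
    have hts' : t - s ≠ 0 := sub_ne_zero.2 hts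
    field_simp
    have e : (fun c : ℝ => deriv f (c * t + (1 - c) * s)) = fun c => deriv f (t * c + s * (1 - c)) := by
      funext c; ring_nf
    rw [e] at hFTC
    linarith [hFTC]

/-- The Löwner matrix trace formula via Hermite's integral representation of the divided
difference: `Tr h* D_f(x) h = Σ_{i,j} |⟨h e_i, e_j⟩|² ∫₀¹ f'(s λ_j + (1-s) λ_i) ds`, and
`[t,s]_f = ∫₀¹ f'(c t + (1-c) s) dc` for `t, s > 0`. -/
theorem stmt_13 (n : ℕ) (f : ℝ → ℝ)
    (hsmooth : ContDiffOn ℝ 1 f (Set.Ioi (0 : ℝ)))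
    (x : Matrix (Fin n) (Fin n) ℂ) (hx : x.PosDef) (h : Matrix (Fin n) (Fin n) ℂ) :
    ((Matrix.trace (hᴴ * Dmap f x h)).re =
      ∑ i, ∑ j,
        ‖((hx.isHermitian.eigenvectorUnitary : Matrix (Fin n) (Fin n) ℂ)ᴴ * h *
            (hx.isHermitian.eigenvectorUnitary : Matrix (Fin n) (Fin n) ℂ)) j i‖ ^ 2 *
          ∫ s in (0 : ℝ)..1,
            deriv f (s * hx.isHermitian.eigenvalues j +
              (1 - s) * hx.isHermitian.eigenvalues i)) ∧
    ∀ t ∈ Set.Ioi (0 : ℝ), ∀ s ∈ Set.Ioi (0 : ℝ),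
      dd f t s = ∫ c in (0 : ℝ)..1, deriv f (c * t + (1 - c) * s) := by
  have herm : ∀ t ∈ Set.Ioi (0:ℝ), ∀ s ∈ Set.Ioi (0:ℝ),
      dd f t s = ∫ c in (0:ℝ)..1, deriv f (c * t + (1 - c) * s) :=
    fun t ht s hs => hermite f hsmooth t s ht hs
  refine ⟨?_, herm⟩
  set He := hx.isHermitian with hHe
  set U : Matrix (Fin n) (Fin n) ℂ := (He.eigenvectorUnitary : Matrix (Fin n) (Fin n) ℂ) with hU
  set a : Matrix (Fin n) (Fin n) ℂ := Uᴴ * h * U with ha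
  set L : Matrix (Fin n) (Fin n) ℂ :=
    Matrix.of fun i j => ((dd f (He.eigenvalues i) (He.eigenvalues j) : ℝ) : ℂ) with hL
  have hD : Dmap f x h = U * (L.hadamard a) * Uᴴ := by
    rw [Dmap, dif_pos He]
  have haH : aᴴ = Uᴴ * (hᴴ * U) := by
    simp [ha, conjTranspose_mul, mul_assoc]
  have htr : Matrix.trace (hᴴ * Dmap f x h) = Matrix.trace (aᴴ * L.hadamard a) := by
    rw [hD, haH]
    rw [show hᴴ * (U * L.hadamard a * Uᴴ) = hᴴ * U * L.hadamard a * Uᴴ by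
      simp [mul_assoc]]
    rw [Matrix.trace_mul_cycle, mul_assoc]
  have hentry : Matrix.trace (aᴴ * L.hadamard a) =
      ((∑ j, ∑ i, ‖a i j‖ ^ 2 * dd f (He.eigenvalues i) (He.eigenvalues j) : ℝ) : ℂ) := by
    simp only [Matrix.trace, Matrix.diag_apply, Matrix.mul_apply,
      Matrix.conjTranspose_apply, Matrix.hadamard_apply, hL, Matrix.of_apply]
    push_cast
    congr 1; funext j; congr 1; funext i
    have hz : star (a i j) * a i j = ((‖a i j‖ : ℂ)) ^ 2 := by
      have := Complex.normSq_eq_conj_mul_self (z := a i j)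
      rw [Complex.star_def, ← this, Complex.normSq_eq_norm_sq]
      push_cast; ring
    calc star (a i j) * (((dd f (He.eigenvalues i) (He.eigenvalues j) : ℝ) : ℂ) * a i j)
        = ((dd f (He.eigenvalues i) (He.eigenvalues j) : ℝ) : ℂ) * (star (a i j) * a i j) := by
          ring
      _ = _ := by rw [hz]; ring
  rw [htr, hentry, Complex.ofReal_re]
  refine Finset.sum_congr rfl fun i _ => Finset.sum_congr rfl fun j _ => ?_
  have := herm (He.eigenvalues j) (hx.eigenvalues_pos j) (He.eigenvalues i) (hx.eigenvalues_pos i)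
  rw [this]
end

section
/- Let β ≥ 0, let μ be a finite positive Borel measure on [0,∞), and let φ:(0,∞)→ℝ be twice differentiable with φ''(t) = β + ∫₀^∞ (1+λ)/(t+λ) dμ(λ) for all t > 0. Then for all x > 0, φ(x) = a + b x + (β/2) x² + ∫₀^∞ (1+λ)·(1 − x + (x+λ) log((x+λ)/(1+λ))) dμ(λ), where a = φ(1) − φ'(1) + β/2 and b = φ'(1) − β. -/
open Matrix
open scoped ComplexOrder

section AuxStmt15
open MeasureTheory Real

lemma aux_log_ge {t : ℝ} (ht : 0 < t) : 1 - t⁻¹ ≤ Real.log t := by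
  have h := Real.log_le_sub_one_of_pos (inv_pos.mpr ht)
  rw [Real.log_inv] at h
  linarith

-- key bound: for x>0, l≥0, 0 ≤ (1+l)*(1-x+(x+l)*log((x+l)/(1+l))) ≤ (x-1)^2
lemma aux_bound0 {x l : ℝ} (hx : 0 < x) (hl : 0 ≤ l) :
    ‖(1 + l) * (1 - x + (x + l) * Real.log ((x + l) / (1 + l)))‖ ≤ (x - 1) ^ 2 := by
  have hs : (0:ℝ) < 1 + l := by linarith
  have ht : (0:ℝ) < x + l := by linarith
  have hq : (0:ℝ) < (x + l) / (1 + l) := div_pos ht hs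
  have hup : Real.log ((x + l) / (1 + l)) ≤ (x - 1) / (1 + l) := by
    have := Real.log_le_sub_one_of_pos hq
    have e : (x + l) / (1 + l) - 1 = (x - 1) / (1 + l) := by field_simp; try ring
    linarith [e ▸ this]
  have hlo : (x - 1) / (x + l) ≤ Real.log ((x + l) / (1 + l)) := by
    have := aux_log_ge hq
    have e : 1 - ((x + l) / (1 + l))⁻¹ = (x - 1) / (x + l) := by
      rw [inv_div]; field_simp; try ring
    linarith [e ▸ this]
  have h1 : (0:ℝ) ≤ 1 - x + (x + l) * Real.log ((x + l) / (1 + l)) := by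
    have := mul_le_mul_of_nonneg_left hlo ht.le
    have e : (x + l) * ((x - 1) / (x + l)) = x - 1 := by field_simp
    nlinarith
  have h2 : (1 + l) * (1 - x + (x + l) * Real.log ((x + l) / (1 + l))) ≤ (x - 1) ^ 2 := by
    have := mul_le_mul_of_nonneg_left hup ht.le
    have e : (x + l) * ((x - 1) / (1 + l)) = (x + l) * (x - 1) / (1 + l) := by ring
    -- (1+l)*(1-x + (x+l)*(x-1)/(1+l)) = (1+l)(1-x) + (x+l)(x-1) = (x-1)(x+l-1-l) = (x-1)^2
    have key : (1 + l) * (1 - x + (x + l) * ((x - 1) / (1 + l))) = (x - 1) ^ 2 := by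
      field_simp; try ring
    nlinarith
  rw [Real.norm_eq_abs, abs_of_nonneg (by positivity)]
  exact h2

lemma aux_ratio_le {x l : ℝ} (hx : 0 < x) (hl : 0 ≤ l) :
    (1 + l) / (x + l) ≤ max 1 x⁻¹ := by
  have ht : (0:ℝ) < x + l := by linarith
  rcases le_total 1 x with h | h
  · exact le_max_of_le_left (by rw [div_le_one ht]; linarith)
  · refine le_max_of_le_right ?_
    rw [div_le_iff₀ ht, inv_mul_eq_div, le_div_iff₀ hx]
    nlinarith

lemma aux_bound1 {x l : ℝ} (hx : 0 < x) (hl : 0 ≤ l) :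
    ‖(1 + l) * Real.log ((x + l) / (1 + l))‖ ≤ |x - 1| * max 1 x⁻¹ := by
  have hs : (0:ℝ) < 1 + l := by linarith
  have ht : (0:ℝ) < x + l := by linarith
  have hq : (0:ℝ) < (x + l) / (1 + l) := div_pos ht hs
  have hmax1 : (1:ℝ) ≤ max 1 x⁻¹ := le_max_left _ _
  have hup : Real.log ((x + l) / (1 + l)) ≤ (x - 1) / (1 + l) := by
    have := Real.log_le_sub_one_of_pos hq
    have e : (x + l) / (1 + l) - 1 = (x - 1) / (1 + l) := by field_simp; try ring
    linarith [e ▸ this]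
  have hlo : (x - 1) / (x + l) ≤ Real.log ((x + l) / (1 + l)) := by
    have := aux_log_ge hq
    have e : 1 - ((x + l) / (1 + l))⁻¹ = (x - 1) / (x + l) := by
      rw [inv_div]; field_simp; try ring
    linarith [e ▸ this]
  rw [Real.norm_eq_abs, abs_le]
  constructor
  · -- lower: (1+l)*log ≥ (1+l)*(x-1)/(x+l) ≥ -|x-1| * ((1+l)/(x+l)) ≥ -|x-1|*max
    have h1 := mul_le_mul_of_nonneg_left hlo hs.le
    have h2 : -(|x - 1| * ((1 + l) / (x + l))) ≤ (1 + l) * ((x - 1) / (x + l)) := by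
      have : -|x - 1| ≤ x - 1 := neg_abs_le _
      have hpos : (0:ℝ) ≤ (1 + l) / (x + l) := by positivity
      calc -(|x - 1| * ((1 + l) / (x + l))) = (-|x - 1|) * ((1 + l) / (x + l)) := by ring
        _ ≤ (x - 1) * ((1 + l) / (x + l)) := mul_le_mul_of_nonneg_right this hpos
        _ = (1 + l) * ((x - 1) / (x + l)) := by ring
    have h3 : |x - 1| * ((1 + l) / (x + l)) ≤ |x - 1| * max 1 x⁻¹ :=
      mul_le_mul_of_nonneg_left (aux_ratio_le hx hl) (abs_nonneg _)
    linarith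
  · -- upper: (1+l)*log ≤ (1+l)*(x-1)/(1+l) = x-1 ≤ |x-1| ≤ |x-1|*max
    have h1 := mul_le_mul_of_nonneg_left hup hs.le
    have e : (1 + l) * ((x - 1) / (1 + l)) = x - 1 := by field_simp
    have h2 : x - 1 ≤ |x - 1| := le_abs_self _
    nlinarith [abs_nonneg (x - 1)]

lemma aux_bound2 {x l : ℝ} (hx : 0 < x) (hl : 0 ≤ l) :
    ‖(1 + l) / (x + l)‖ ≤ max 1 x⁻¹ := by
  have ht : (0:ℝ) < x + l := by linarith
  rw [Real.norm_eq_abs, abs_of_nonneg (by positivity)]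
  exact aux_ratio_le hx hl

lemma aux_hd1 (l : ℝ) (hl : 0 ≤ l) {x : ℝ} (hx : 0 < x) :
    HasDerivAt (fun y => (1 + l) * Real.log ((y + l) / (1 + l))) ((1 + l) / (x + l)) x := by
  have hs : (0:ℝ) < 1 + l := by linarith
  have ht : (0:ℝ) < x + l := by linarith
  have h1 : HasDerivAt (fun y : ℝ => (y + l) / (1 + l)) (1 / (1 + l)) x := by
    simpa using ((hasDerivAt_id x).add_const l).div_const (1 + l)
  have h2 := (Real.hasDerivAt_log (by positivity : ((x:ℝ) + l) / (1 + l) ≠ 0)).comp x h1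
  have h3 := h2.const_mul (1 + l)
  refine h3.congr_deriv ?_
  field_simp
  try ring

lemma aux_hd0 (l : ℝ) (hl : 0 ≤ l) {x : ℝ} (hx : 0 < x) :
    HasDerivAt (fun y => (1 + l) * (1 - y + (y + l) * Real.log ((y + l) / (1 + l))))
      ((1 + l) * Real.log ((x + l) / (1 + l))) x := by
  have hs : (0:ℝ) < 1 + l := by linarith
  have ht : (0:ℝ) < x + l := by linarith
  have h1 : HasDerivAt (fun y : ℝ => (y + l) / (1 + l)) (1 / (1 + l)) x := by
    simpa using ((hasDerivAt_id x).add_const l).div_const (1 + l)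
  have h2 := (Real.hasDerivAt_log (by positivity : ((x:ℝ) + l) / (1 + l) ≠ 0)).comp x h1
  have h3 : HasDerivAt (fun y : ℝ => (y + l) * Real.log ((y + l) / (1 + l)))
      (1 * Real.log ((x + l) / (1 + l)) + (x + l) * (((x + l) / (1 + l))⁻¹ * (1 / (1 + l)))) x :=
    ((hasDerivAt_id x).add_const l).mul h2
  have h4 : HasDerivAt (fun y : ℝ => 1 - y + (y + l) * Real.log ((y + l) / (1 + l)))
      (-1 + (1 * Real.log ((x + l) / (1 + l)) + (x + l) * (((x + l) / (1 + l))⁻¹ * (1 / (1 + l))))) x := by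
    exact ((hasDerivAt_id x).const_sub 1).add h3
  have h5 := h4.const_mul (1 + l)
  refine h5.congr_deriv ?_
  field_simp
  try ring
  try ring


lemma aux_ae (μ : Measure ℝ) (hμ : μ (Set.Iio (0:ℝ)) = 0) : ∀ᵐ l ∂μ, 0 ≤ l := by
  rw [ae_iff]
  convert hμ using 2
  ext l; simp [not_le]

lemma aux_meas0 (x : ℝ) :
    Measurable fun l : ℝ => (1 + l) * (1 - x + (x + l) * Real.log ((x + l) / (1 + l))) := by
  exact (measurable_const.add measurable_id).mul
    (measurable_const.add ((measurable_const.add measurable_id).mul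
      (Real.measurable_log.comp ((measurable_const.add measurable_id).div
        (measurable_const.add measurable_id)))))

lemma aux_meas1 (x : ℝ) :
    Measurable fun l : ℝ => (1 + l) * Real.log ((x + l) / (1 + l)) :=
  (measurable_const.add measurable_id).mul
    (Real.measurable_log.comp ((measurable_const.add measurable_id).div
      (measurable_const.add measurable_id)))

lemma aux_ball {x₀ x : ℝ} (hx₀ : 0 < x₀) (hx : x ∈ Metric.ball x₀ (x₀ / 2)) :
    x₀ / 2 < x ∧ |x - 1| ≤ |x₀ - 1| + x₀ / 2 ∧ max 1 x⁻¹ ≤ max 1 (2 / x₀) := by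
  rw [Metric.mem_ball, Real.dist_eq, abs_lt] at hx
  have hxpos : x₀ / 2 < x := by linarith
  refine ⟨hxpos, ?_, ?_⟩
  · have : |x - 1| ≤ |x₀ - 1| + |x - x₀| := by
      calc |x - 1| = |(x₀ - 1) + (x - x₀)| := by ring_nf
        _ ≤ |x₀ - 1| + |x - x₀| := abs_add_le _ _
    have hab : |x - x₀| < x₀ / 2 := abs_lt.mpr hx
    linarith
  · apply max_le_max le_rfl
    rw [inv_le_comm₀ (by linarith) (by positivity), inv_div]
    linarith

lemma aux_deriv0 (μ : Measure ℝ) [IsFiniteMeasure μ] (hμ : μ (Set.Iio (0:ℝ)) = 0)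
    {x₀ : ℝ} (hx₀ : 0 < x₀) :
    HasDerivAt (fun x => ∫ l, (1 + l) * (1 - x + (x + l) * Real.log ((x + l) / (1 + l))) ∂μ)
      (∫ l, (1 + l) * Real.log ((x₀ + l) / (1 + l)) ∂μ) x₀ := by
  have hae := aux_ae μ hμ
  have hεpos : 0 < x₀ / 2 := by positivity
  refine (hasDerivAt_integral_of_dominated_loc_of_deriv_le (bound := fun _ =>
      (|x₀ - 1| + x₀ / 2) * max 1 (2 / x₀))
      (F' := fun x l => (1 + l) * Real.log ((x + l) / (1 + l))) (Metric.ball_mem_nhds x₀ hεpos) ?_ ?_ ?_ ?_ ?_ ?_).2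
  · filter_upwards with x
    exact (aux_meas0 x).aestronglyMeasurable
  · refine Integrable.mono' (integrable_const ((x₀ - 1) ^ 2)) (aux_meas0 x₀).aestronglyMeasurable ?_
    filter_upwards [hae] with l hl
    exact aux_bound0 hx₀ hl
  · exact (aux_meas1 x₀).aestronglyMeasurable
  · filter_upwards [hae] with l hl x hx
    obtain ⟨h1, h2, h3⟩ := aux_ball hx₀ hx
    have hx' : 0 < x := by linarith
    calc ‖(1 + l) * Real.log ((x + l) / (1 + l))‖ ≤ |x - 1| * max 1 x⁻¹ := aux_bound1 hx' hl
      _ ≤ (|x₀ - 1| + x₀ / 2) * max 1 (2 / x₀) := by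
          apply mul_le_mul h2 h3 (le_max_of_le_left zero_le_one) ?_
          · positivity
  · exact integrable_const _
  · filter_upwards [hae] with l hl x hx
    obtain ⟨h1, _, _⟩ := aux_ball hx₀ hx
    exact aux_hd0 l hl (by linarith)

lemma aux_deriv1 (μ : Measure ℝ) [IsFiniteMeasure μ] (hμ : μ (Set.Iio (0:ℝ)) = 0)
    {x₀ : ℝ} (hx₀ : 0 < x₀) :
    HasDerivAt (fun x => ∫ l, (1 + l) * Real.log ((x + l) / (1 + l)) ∂μ)
      (∫ l, (1 + l) / (x₀ + l) ∂μ) x₀ := by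
  have hae := aux_ae μ hμ
  have hεpos : 0 < x₀ / 2 := by positivity
  refine (hasDerivAt_integral_of_dominated_loc_of_deriv_le (bound := fun _ =>
      max 1 (2 / x₀)) (F' := fun x l => (1 + l) / (x + l)) (Metric.ball_mem_nhds x₀ hεpos) ?_ ?_ ?_ ?_ ?_ ?_).2
  · filter_upwards with x
    exact (aux_meas1 x).aestronglyMeasurable
  · refine Integrable.mono' (integrable_const (|x₀ - 1| * max 1 x₀⁻¹))
      (aux_meas1 x₀).aestronglyMeasurable ?_
    filter_upwards [hae] with l hl
    exact aux_bound1 hx₀ hl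
  · exact (by fun_prop : Measurable fun l : ℝ => (1 + l) / (x₀ + l)).aestronglyMeasurable
  · filter_upwards [hae] with l hl x hx
    obtain ⟨h1, _, h3⟩ := aux_ball hx₀ hx
    have hx' : 0 < x := by linarith
    calc ‖(1 + l) / (x + l)‖ ≤ max 1 x⁻¹ := aux_bound2 hx' hl
      _ ≤ max 1 (2 / x₀) := h3
  · exact integrable_const _
  · filter_upwards [hae] with l hl x hx
    obtain ⟨h1, _, _⟩ := aux_ball hx₀ hx
    exact aux_hd1 l hl (by linarith)

lemma aux_zero0 (μ : Measure ℝ) (hμ : μ (Set.Iio (0:ℝ)) = 0) :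
    (∫ l, (1 + l) * (1 - (1:ℝ) + (1 + l) * Real.log ((1 + l) / (1 + l))) ∂μ) = 0 := by
  rw [integral_eq_zero_of_ae]
  filter_upwards [aux_ae μ hμ] with l hl
  have : (1:ℝ) + l ≠ 0 := by linarith
  simp [div_self this]

lemma aux_zero1 (μ : Measure ℝ) (hμ : μ (Set.Iio (0:ℝ)) = 0) :
    (∫ l, (1 + l) * Real.log (((1:ℝ) + l) / (1 + l)) ∂μ) = 0 := by
  rw [integral_eq_zero_of_ae]
  filter_upwards [aux_ae μ hμ] with l hl
  have : (1:ℝ) + l ≠ 0 := by linarith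
  simp [div_self this]

lemma aux_const {f : ℝ → ℝ} (h : ∀ y ∈ Set.Ioi (0:ℝ), HasDerivAt f 0 y) {x : ℝ}
    (hx : 0 < x) : f x = f 1 := by
  have hc : ∀ a b : ℝ, 0 < a → a ≤ b →
      f b = f a := by
    intro a b ha hab
    have hsub : Set.Icc a b ⊆ Set.Ioi 0 := fun y hy => lt_of_lt_of_le ha hy.1
    have := constant_of_has_deriv_right_zero
      (fun y hy => ((h y (hsub hy)).continuousAt).continuousWithinAt)
      (fun y hy => ((h y (Set.mem_Ioi.mpr (lt_of_lt_of_le ha hy.1))).hasDerivWithinAt))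
      b (Set.right_mem_Icc.mpr hab)
    exact this
  rcases le_total x 1 with hx1 | hx1
  · exact (hc x 1 hx hx1).symm
  · exact hc 1 x one_pos hx1

end AuxStmt15

/-- Canonical integral representation of a matrix entropy. -/
theorem stmt_15 (β : ℝ) (hβ : 0 ≤ β) (μ : MeasureTheory.Measure ℝ)
    [MeasureTheory.IsFiniteMeasure μ] (hμ : μ (Set.Iio (0 : ℝ)) = 0)
    (φ : ℝ → ℝ)
    (hd1 : ∀ t ∈ Set.Ioi (0 : ℝ), DifferentiableAt ℝ φ t)
    (hd2 : ∀ t ∈ Set.Ioi (0 : ℝ), DifferentiableAt ℝ (deriv φ) t)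
    (hrep : ∀ t ∈ Set.Ioi (0 : ℝ),
      deriv (deriv φ) t = β + ∫ l, (1 + l) / (t + l) ∂μ) :
    ∀ x ∈ Set.Ioi (0 : ℝ),
      φ x = (φ 1 - deriv φ 1 + β / 2) + (deriv φ 1 - β) * x + β / 2 * x ^ 2 +
        ∫ l, (1 + l) * (1 - x + (x + l) * Real.log ((x + l) / (1 + l))) ∂μ := by
  have hA : ∀ y ∈ Set.Ioi (0:ℝ), deriv φ y =
      (deriv φ 1 - β) + β * y + ∫ l, (1 + l) * Real.log ((y + l) / (1 + l)) ∂μ := by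
    set q : ℝ → ℝ := fun y => deriv φ y -
      ((deriv φ 1 - β) + β * y + ∫ l, (1 + l) * Real.log ((y + l) / (1 + l)) ∂μ) with hqdef
    have hqd : ∀ y ∈ Set.Ioi (0:ℝ), HasDerivAt q 0 y := by
      intro y hy
      have hy' : 0 < y := hy
      have h1 : HasDerivAt (deriv φ) (deriv (deriv φ) y) y := (hd2 y hy).hasDerivAt
      have hb : HasDerivAt (fun z : ℝ => (deriv φ 1 - β) + β * z) β y := by
        simpa using ((hasDerivAt_id y).const_mul β).const_add (deriv φ 1 - β)
      have h2 := hb.add (aux_deriv1 μ hμ hy')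
      have h3 := h1.sub h2
      have h4 : deriv (deriv φ) y - (β + ∫ l, (1 + l) / (y + l) ∂μ) = 0 := by
        rw [hrep y hy]; ring
      rw [h4] at h3
      exact h3
    intro y hy
    have hq1 : q 1 = 0 := by
      simp only [hqdef, aux_zero1 μ hμ]
      ring
    have := aux_const hqd (Set.mem_Ioi.mp hy)
    rw [hq1] at this
    have : deriv φ y -
      ((deriv φ 1 - β) + β * y + ∫ l, (1 + l) * Real.log ((y + l) / (1 + l)) ∂μ) = 0 := this
    linarith
  intro x hx
  have hx' : 0 < x := hx
  set r : ℝ → ℝ := fun y => φ y -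
    ((φ 1 - deriv φ 1 + β / 2) + (deriv φ 1 - β) * y + β / 2 * y ^ 2 +
      ∫ l, (1 + l) * (1 - y + (y + l) * Real.log ((y + l) / (1 + l))) ∂μ) with hrdef
  have hrd : ∀ y ∈ Set.Ioi (0:ℝ), HasDerivAt r 0 y := by
    intro y hy
    have hy' : 0 < y := hy
    have h1 : HasDerivAt φ (deriv φ y) y := (hd1 y hy).hasDerivAt
    have hpoly : HasDerivAt (fun z : ℝ => (φ 1 - deriv φ 1 + β / 2) + (deriv φ 1 - β) * z
        + β / 2 * z ^ 2) ((deriv φ 1 - β) + β * y) y := by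
      have ha : HasDerivAt (fun z : ℝ => (φ 1 - deriv φ 1 + β / 2) + (deriv φ 1 - β) * z)
          (deriv φ 1 - β) y := by
        simpa using ((hasDerivAt_id y).const_mul (deriv φ 1 - β)).const_add (φ 1 - deriv φ 1 + β / 2)
      have hb : HasDerivAt (fun z : ℝ => β / 2 * z ^ 2) (β / 2 * (2 * y)) y := by
        simpa using ((hasDerivAt_pow 2 y).const_mul (β / 2))
      have := ha.add hb
      refine this.congr_deriv ?_
      ring
    have h2 := hpoly.add (aux_deriv0 μ hμ hy')
    have h3 := h1.sub h2
    have h4 : deriv φ y - ((deriv φ 1 - β) + β * y +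
        ∫ l, (1 + l) * Real.log ((y + l) / (1 + l)) ∂μ) = 0 := by
      rw [hA y hy]; ring
    rw [h4] at h3
    exact h3
  have hr1 : r 1 = 0 := by
    simp only [hrdef, aux_zero0 μ hμ]
    ring
  have := aux_const hrd hx'
  rw [hr1] at this
  have h : φ x - ((φ 1 - deriv φ 1 + β / 2) + (deriv φ 1 - β) * x + β / 2 * x ^ 2 +
      ∫ l, (1 + l) * (1 - x + (x + l) * Real.log ((x + l) / (1 + l))) ∂μ) = 0 := this
  linarith
end

section
/- For all real numbers x with 0 < x ≤ 1 and all λ ≥ 0, the quantity h(x,λ) = (1+λ)·(1 − x + (x+λ) log((x+λ)/(1+λ))) satisfies 0 ≤ h(x,λ) ≤ (1−x)². -/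
open Matrix
open scoped ComplexOrder

/-- For `0 < x ≤ 1` and `λ ≥ 0`, the kernel
`h(x,λ) = (1+λ)(1 - x + (x+λ) log((x+λ)/(1+λ)))` satisfies `0 ≤ h(x,λ) ≤ (1-x)²`. -/
theorem stmt_18 :
    ∀ x : ℝ, 0 < x → x ≤ 1 → ∀ l : ℝ, 0 ≤ l →
      0 ≤ (1 + l) * (1 - x + (x + l) * Real.log ((x + l) / (1 + l))) ∧
      (1 + l) * (1 - x + (x + l) * Real.log ((x + l) / (1 + l))) ≤ (1 - x) ^ 2 := by
  intro x hx hx1 l hl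
  have hpl : (0:ℝ) < 1 + l := by linarith
  have hxl : (0:ℝ) < x + l := by linarith
  set a : ℝ := (x + l) / (1 + l) with ha
  have hapos : 0 < a := div_pos hxl hpl
  have hle : Real.log a ≤ a - 1 := Real.log_le_sub_one_of_pos hapos
  have hge : 1 - a⁻¹ ≤ Real.log a := by
    have h := Real.log_le_sub_one_of_pos (inv_pos.mpr hapos)
    rw [Real.log_inv] at h
    linarith
  have haval : a * (1 + l) = x + l := div_mul_cancel₀ _ hpl.ne'
  have hainv : (x + l) * a⁻¹ = 1 + l := by
    field_simp [ha]
    exact haval.symm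
  constructor
  · have h1 : (x + l) * (1 - a⁻¹) ≤ (x + l) * Real.log a :=
      mul_le_mul_of_nonneg_left hge hxl.le
    nlinarith [hainv]
  · have h1 : (x + l) * Real.log a ≤ (x + l) * (a - 1) :=
      mul_le_mul_of_nonneg_left hle hxl.le
    nlinarith [haval, mul_le_mul_of_nonneg_left h1 hpl.le]
end
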